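/- arXiv:1211.4147 — 7 statements merged into one kernel-verified Lean document; each statement's English description precedes it below -/
import Mathlib

section
/- Let x ∈ S_{2n} be a fixed-point-free involution written as the ordered product of transpositions [a_1,b_1][a_2,b_2]···[a_n,b_n] with a_1 < a_2 < ··· < a_n and a_t < b_t = x(a_t). Then the number of inversions of the word a_1 b_1 a_2 b_2 ··· a_n b_n of length 2n equals Σ_{t=1}^n (b_t - a_t - 1) minus the number of crossing pairs of arcs, where arcs (a_s,b_s) and (a_t,b_t) with s < t cross if a_s < a_t < b_s < b_t. -/
/-- The word `a₁ b₁ a₂ b₂ ⋯ aₙ bₙ` as a function of positions `0, 1, …, 2n-1`. -/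
def word (a b : ℕ → ℕ) : ℕ → ℕ := fun k => if k % 2 = 0 then a (k / 2) else b (k / 2)

/-- The number of inversions of the word `a₁ b₁ a₂ b₂ ⋯ aₙ bₙ`. -/
def wordInv (n : ℕ) (a b : ℕ → ℕ) : ℕ :=
  (((Finset.range (2 * n)) ×ˢ (Finset.range (2 * n))).filter fun p =>
    p.1 < p.2 ∧ word a b p.2 < word a b p.1).card

/-- The number of crossing pairs of arcs: pairs `s < t` with `aₛ < aₜ < bₛ < bₜ`. -/
def crossings (n : ℕ) (a b : ℕ → ℕ) : ℕ :=
  (((Finset.range n) ×ˢ (Finset.range n)).filter fun p =>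
    p.1 < p.2 ∧ a p.1 < a p.2 ∧ a p.2 < b p.1 ∧ b p.1 < b p.2).card

lemma word_even (a b : ℕ → ℕ) (s : ℕ) : word a b (2 * s) = a s := by
  have h1 : (2 * s) % 2 = 0 := by omega
  have h2 : (2 * s) / 2 = s := by omega
  simp [word, h1, h2]

lemma word_odd (a b : ℕ → ℕ) (s : ℕ) : word a b (2 * s + 1) = b s := by
  have h1 : (2 * s + 1) % 2 = 1 := by omega
  have h2 : (2 * s + 1) / 2 = s := by omega
  simp [word, h1, h2]

lemma sum_range_two_mul {M : Type} [AddCommMonoid M] (n : ℕ) (f : ℕ → M) :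
    ∑ k ∈ Finset.range (2 * n), f k
      = ∑ s ∈ Finset.range n, f (2 * s) + ∑ s ∈ Finset.range n, f (2 * s + 1) := by
  induction n with
  | zero => simp
  | succ n ih =>
    have h : 2 * (n + 1) = (2 * n + 1) + 1 := by omega
    rw [h, Finset.sum_range_succ, Finset.sum_range_succ, ih,
      Finset.sum_range_succ, Finset.sum_range_succ (fun s => f (2 * s + 1))]
    abel


/-- For a fixed-point-free involution `x ∈ S_{2n}` written as `[a₁,b₁]⋯[aₙ,bₙ]` with
`a₁ < ⋯ < aₙ` and `aₜ < bₜ = x(aₜ)`, the number of inversions of the word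
`a₁ b₁ a₂ b₂ ⋯ aₙ bₙ` equals `Σₜ (bₜ - aₜ - 1) - c(x)`, where `c(x)` is the number of
crossing pairs of arcs. -/
theorem wordInv_eq (n : ℕ) (x : Equiv.Perm (Fin (2 * n)))
    (hinv : x * x = 1) (hfpf : ∀ i, x i ≠ i) (a b : ℕ → ℕ)
    (ha : ∀ s t, s < t → t < n → a s < a t)
    (hab : ∀ t < n, a t < b t)
    (hbx : ∀ t < n, ∃ h : a t < 2 * n, b t = (x ⟨a t, h⟩ : ℕ)) :
    (wordInv n a b : ℤ) =
      (∑ t ∈ Finset.range n, ((b t : ℤ) - (a t : ℤ) - 1)) - (crossings n a b : ℤ) := by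
  have hxx : ∀ i, x (x i) = i := by
    intro i
    have h : (x * x) i = (1 : Equiv.Perm (Fin (2 * n))) i := by rw [hinv]
    simpa [Equiv.Perm.mul_apply] using h
  have han : ∀ t < n, a t < 2 * n := fun t ht => (hbx t ht).1
  have hbn : ∀ t < n, b t < 2 * n := by
    intro t ht
    obtain ⟨h, e⟩ := hbx t ht
    rw [e]; exact (x ⟨a t, h⟩).isLt
  have hainj : ∀ s t, s < n → t < n → a s = a t → s = t := by
    intro s t hs ht he
    rcases lt_trichotomy s t with h | h | h
    · exact absurd he (by have := ha s t h ht; omega)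
    · exact h
    · exact absurd he (by have := ha t s h hs; omega)
  have hba : ∀ t, ∀ ht : t < n, ∀ h : b t < 2 * n, (x ⟨b t, h⟩ : ℕ) = a t := by
    intro t ht h
    obtain ⟨h1, e1⟩ := hbx t ht
    have : (⟨b t, h⟩ : Fin (2 * n)) = x ⟨a t, h1⟩ := by
      apply Fin.ext; simpa using e1
    rw [this, hxx]
  have hbinj : ∀ s t, s < n → t < n → b s = b t → s = t := by
    intro s t hs ht he
    obtain ⟨h1, e1⟩ := hbx s hs
    obtain ⟨h2, e2⟩ := hbx t ht
    apply hainj s t hs ht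
    have : x ⟨a s, h1⟩ = x ⟨a t, h2⟩ := by
      apply Fin.ext; rw [← e1, ← e2, he]
    have := x.injective this
    simpa using congrArg Fin.val this
  have hab_ne : ∀ s t, s < n → t < n → a s ≠ b t := by
    intro s t hs ht he
    have hbt : b t < 2 * n := hbn t ht
    have h1 : b s = a t := by
      obtain ⟨h2, e2⟩ := hbx s hs
      rw [e2]
      have : (⟨a s, h2⟩ : Fin (2 * n)) = ⟨b t, hbt⟩ := by apply Fin.ext; simpa using he
      rw [this, hba t ht hbt]
    have := hab s hs
    have := hab t ht
    omega
  -- injectivity of word on range (2n)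
  have hwinj : ∀ k ∈ Finset.range (2 * n), ∀ l ∈ Finset.range (2 * n),
      word a b k = word a b l → k = l := by
    intro k hk l hl he
    rw [Finset.mem_range] at hk hl
    rcases Nat.even_or_odd k with ⟨k', hk'⟩ | ⟨k', hk'⟩ <;>
      rcases Nat.even_or_odd l with ⟨l', hl'⟩ | ⟨l', hl'⟩
    · have ek : k = 2 * k' := by omega
      have el : l = 2 * l' := by omega
      subst ek; subst el
      rw [word_even, word_even] at he
      have := hainj k' l' (by omega) (by omega) he; omega
    · have ek : k = 2 * k' := by omega
      have el : l = 2 * l' + 1 := by omega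
      subst ek; subst el
      rw [word_even, word_odd] at he
      exact absurd he (hab_ne k' l' (by omega) (by omega))
    · have ek : k = 2 * k' + 1 := by omega
      have el : l = 2 * l' := by omega
      subst ek; subst el
      rw [word_odd, word_even] at he
      exact absurd he.symm (hab_ne l' k' (by omega) (by omega))
    · have ek : k = 2 * k' + 1 := by omega
      have el : l = 2 * l' + 1 := by omega
      subst ek; subst el
      rw [word_odd, word_odd] at he
      have := hbinj k' l' (by omega) (by omega) he; omega
  -- image of word on range (2n) is range (2n)
  have himg : (Finset.range (2 * n)).image (word a b) = Finset.range (2 * n) := by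
    apply Finset.eq_of_subset_of_card_le
    · intro m hm
      rw [Finset.mem_image] at hm
      obtain ⟨k, hk, rfl⟩ := hm
      rw [Finset.mem_range] at hk
      have hk2 : k / 2 < n := by omega
      rw [Finset.mem_range]
      unfold word
      split
      · exact han _ hk2
      · exact hbn _ hk2
    · rw [Finset.card_image_of_injOn (fun k hk l hl => hwinj k hk l hl), Finset.card_range]
  -- per-arc count
  have hcount : ∀ t < n,
      (∑ k ∈ Finset.range (2 * n),
        if a t < word a b k ∧ word a b k < b t then 1 else 0) = b t - a t - 1 := by
    intro t ht
    rw [← Finset.card_filter]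
    have h1 : ((Finset.range (2 * n)).filter
        (fun k => a t < word a b k ∧ word a b k < b t)).card
        = (((Finset.range (2 * n)).filter
            (fun k => a t < word a b k ∧ word a b k < b t)).image (word a b)).card := by
      rw [Finset.card_image_of_injOn]
      intro k hk l hl
      exact hwinj k (Finset.mem_of_mem_filter k hk) l (Finset.mem_of_mem_filter l hl)
    have h4 : ((Finset.range (2 * n)).filter
        (fun k => a t < word a b k ∧ word a b k < b t)).image (word a b)
        = Finset.Ioo (a t) (b t) := by
      ext m
      simp only [Finset.mem_image, Finset.mem_filter, Finset.mem_range, Finset.mem_Ioo]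
      constructor
      · rintro ⟨k, ⟨hk, h5, h6⟩, rfl⟩; exact ⟨h5, h6⟩
      · intro hm
        have hm2 : m ∈ Finset.range (2 * n) := by
          rw [Finset.mem_range]; have := hbn t ht; omega
        rw [← himg, Finset.mem_image] at hm2
        obtain ⟨k, hk, rfl⟩ := hm2
        exact ⟨k, ⟨Finset.mem_range.mp hk, hm.1, hm.2⟩, rfl⟩
    rw [h1, h4, Nat.card_Ioo]
  -- inversion count as double sums over range n
  have hW : wordInv n a b
      = ∑ t ∈ Finset.range n, ∑ s ∈ Finset.range n,
          (if t < s ∧ a s < b t then 1 else 0)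
        + ∑ t ∈ Finset.range n, ∑ s ∈ Finset.range n,
          (if t < s ∧ b s < b t then 1 else 0) := by
    unfold wordInv
    rw [Finset.card_filter, Finset.sum_product]
    rw [sum_range_two_mul n (fun p => ∑ q ∈ Finset.range (2 * n),
      if p < q ∧ word a b q < word a b p then 1 else 0)]
    have hz1 : ∑ t ∈ Finset.range n, (∑ q ∈ Finset.range (2 * n),
        if 2 * t < q ∧ word a b q < word a b (2 * t) then 1 else 0)
        = 0 := by
      apply Finset.sum_eq_zero; intro t ht
      rw [Finset.mem_range] at ht
      rw [sum_range_two_mul n (fun q =>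
        if 2 * t < q ∧ word a b q < word a b (2 * t) then 1 else 0)]
      have e1 : ∑ s ∈ Finset.range n,
          (if 2 * t < 2 * s ∧ word a b (2 * s) < word a b (2 * t) then 1 else 0) = 0 := by
        apply Finset.sum_eq_zero; intro s hs
        rw [Finset.mem_range] at hs
        rw [word_even, word_even, if_neg]
        rintro ⟨h1, h2⟩
        have := ha t s (by omega) hs; omega
      have e2 : ∑ s ∈ Finset.range n,
          (if 2 * t < 2 * s + 1 ∧ word a b (2 * s + 1) < word a b (2 * t) then 1 else 0)
          = 0 := by
        apply Finset.sum_eq_zero; intro s hs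
        rw [Finset.mem_range] at hs
        rw [word_odd, word_even, if_neg]
        rintro ⟨h1, h2⟩
        have h3 : t ≤ s := by omega
        rcases eq_or_lt_of_le h3 with h4 | h4
        · subst h4; have := hab t ht; omega
        · have := ha t s h4 hs; have := hab s hs; omega
      rw [e1, e2]
      rfl
    rw [hz1, zero_add, ← Finset.sum_add_distrib]
    apply Finset.sum_congr rfl
    intro t ht
    rw [Finset.mem_range] at ht
    rw [sum_range_two_mul n (fun q =>
      if 2 * t + 1 < q ∧ word a b q < word a b (2 * t + 1) then 1 else 0)]
    congr 1
    · apply Finset.sum_congr rfl; intro s hs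
      rw [word_even, word_odd]
      apply if_congr _ rfl rfl
      constructor
      · rintro ⟨h1, h2⟩; exact ⟨by omega, h2⟩
      · rintro ⟨h1, h2⟩; exact ⟨by omega, h2⟩
    · apply Finset.sum_congr rfl; intro s hs
      rw [word_odd, word_odd]
      apply if_congr _ rfl rfl
      constructor
      · rintro ⟨h1, h2⟩; exact ⟨by omega, h2⟩
      · rintro ⟨h1, h2⟩; exact ⟨by omega, h2⟩
  -- crossings as a double sum (summation order swapped)
  have hC : crossings n a b
      = ∑ t ∈ Finset.range n, ∑ s ∈ Finset.range n,
          (if s < t ∧ a s < a t ∧ a t < b s ∧ b s < b t then 1 else 0) := by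
    unfold crossings
    rw [Finset.card_filter, Finset.sum_product]
    rw [Finset.sum_comm]
  -- the total inside count
  have hN : ∑ t ∈ Finset.range n, (b t - a t - 1)
      = ∑ t ∈ Finset.range n, ∑ s ∈ Finset.range n,
          (if t < s ∧ a s < b t then 1 else 0)
        + (∑ t ∈ Finset.range n, ∑ s ∈ Finset.range n,
            (if s < t ∧ a s < a t ∧ a t < b s ∧ b s < b t then 1 else 0)
          + ∑ t ∈ Finset.range n, ∑ s ∈ Finset.range n,
            (if t < s ∧ b s < b t then 1 else 0)) := by
    rw [← Finset.sum_add_distrib, ← Finset.sum_add_distrib]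
    apply Finset.sum_congr rfl
    intro t ht
    rw [Finset.mem_range] at ht
    rw [← hcount t ht]
    rw [sum_range_two_mul n (fun k =>
      if a t < word a b k ∧ word a b k < b t then 1 else 0)]
    congr 1
    · apply Finset.sum_congr rfl; intro s hs
      rw [Finset.mem_range] at hs
      rw [word_even]
      apply if_congr _ rfl rfl
      constructor
      · rintro ⟨h1, h2⟩
        refine ⟨?_, h2⟩
        by_contra h3
        push_neg at h3
        rcases eq_or_lt_of_le h3 with h4 | h4
        · subst h4; omega
        · have := ha s t h4 ht; omega
      · rintro ⟨h1, h2⟩; exact ⟨ha t s h1 hs, h2⟩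
    · rw [← Finset.sum_add_distrib]
      apply Finset.sum_congr rfl; intro s hs
      rw [Finset.mem_range] at hs
      rw [word_odd]
      have hps := hab s hs
      have hpt := hab t ht
      rcases lt_trichotomy s t with h | h | h
      · have h4 := ha s t h ht
        by_cases h5 : a t < b s ∧ b s < b t
        · rw [if_pos h5, if_pos ⟨h, h4, h5.1, h5.2⟩, if_neg (by rintro ⟨c, _⟩; omega)]
        · rw [if_neg h5, if_neg (by rintro ⟨_, _, c, d⟩; exact h5 ⟨c, d⟩),
            if_neg (by rintro ⟨c, _⟩; omega)]
      · subst h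
        rw [if_neg (by omega), if_neg (by omega), if_neg (by omega)]
      · have h4 := ha t s h hs
        by_cases h5 : b s < b t
        · rw [if_pos ⟨by omega, h5⟩, if_neg (by rintro ⟨c, _⟩; omega), if_pos ⟨h, h5⟩]
        · rw [if_neg (by rintro ⟨_, c⟩; exact h5 c), if_neg (by rintro ⟨c, _⟩; omega),
            if_neg (by rintro ⟨_, c⟩; exact h5 c)]
  have key : wordInv n a b + crossings n a b = ∑ t ∈ Finset.range n, (b t - a t - 1) := by
    rw [hW, hC, hN]; ring
  have hcast : ((∑ t ∈ Finset.range n, (b t - a t - 1) : ℕ) : ℤ)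
      = ∑ t ∈ Finset.range n, ((b t : ℤ) - (a t : ℤ) - 1) := by
    rw [Nat.cast_sum]
    apply Finset.sum_congr rfl
    intro t ht
    have := hab t (Finset.mem_range.mp ht)
    omega
  have key2 := congrArg (Nat.cast : ℕ → ℤ) key
  push_cast at key2
  rw [← hcast]
  omega
end

section
/- For a fixed-point-free involution x ∈ S_{2n} written as [a_1,b_1]···[a_n,b_n] with a_1 < ··· < a_n and a_t < b_t, the quantity Σ_{t=1}^n (b_t - a_t - 1) - c(x), where c(x) is the number of pairs s < t with a_s < a_t < b_s < b_t, equals (inv(x) - n)/2. -/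
/-- The number of inversions of a permutation. -/
def invCount {m : ℕ} (x : Equiv.Perm (Fin m)) : ℕ :=
  ((Finset.univ : Finset (Fin m × Fin m)).filter fun p => p.1 < p.2 ∧ x p.2 < x p.1).card

/-- For a fixed-point-free involution `x ∈ S_{2n}` written as `[a₁,b₁]⋯[aₙ,bₙ]` with
`a₁ < ⋯ < aₙ` and `aₜ < bₜ = x(aₜ)`, we have
`Σₜ (bₜ - aₜ - 1) - c(x) = (inv(x) - n)/2`. -/
theorem length_formula (n : ℕ) (x : Equiv.Perm (Fin (2 * n)))
    (hinv : x * x = 1) (hfpf : ∀ i, x i ≠ i) (a b : ℕ → ℕ)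
    (ha : ∀ s t, s < t → t < n → a s < a t)
    (hab : ∀ t < n, a t < b t)
    (hbx : ∀ t < n, ∃ h : a t < 2 * n, b t = (x ⟨a t, h⟩ : ℕ)) :
    (∑ t ∈ Finset.range n, ((b t : ℤ) - (a t : ℤ) - 1)) - (crossings n a b : ℤ) =
      ((invCount x : ℤ) - (n : ℤ)) / 2 := by
  classical
  rcases Nat.eq_zero_or_pos n with hn0 | hn
  · subst hn0
    simp [crossings, invCount]
  have hN : 0 < 2 * n := by omega
  have hxx : ∀ i, x (x i) = i := by
    intro i
    have h := congrArg (fun g : Equiv.Perm (Fin (2 * n)) => g i) hinv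
    simpa [Equiv.Perm.mul_apply] using h
  have haval : ∀ t, t < n → a t < 2 * n := by
    intro t ht; obtain ⟨h, _⟩ := hbx t ht; exact h
  obtain ⟨fa, hfa⟩ : ∃ f : ℕ → Fin (2 * n), ∀ t, t < n → ((f t : ℕ) = a t) :=
    ⟨fun t => ⟨a t % (2 * n), Nat.mod_lt _ hN⟩, fun t ht => Nat.mod_eq_of_lt (haval t ht)⟩
  have hb : ∀ t, t < n → ((x (fa t) : Fin (2 * n)) : ℕ) = b t := by
    intro t ht
    obtain ⟨h, hbt⟩ := hbx t ht
    have hfe : fa t = ⟨a t, h⟩ := Fin.ext (hfa t ht)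
    rw [hfe, hbt]
  have hst : ∀ s t, s < n → t < n → (a s < a t ↔ s < t) := by
    intro s t hs ht
    constructor
    · intro h
      rcases lt_trichotomy s t with h' | h' | h'
      · exact h'
      · subst h'; omega
      · exact absurd (ha t s h' hs) (by omega)
    · intro h; exact ha s t h ht
  have hfainj : ∀ s t, s < n → t < n → fa s = fa t → s = t := by
    intro s t hs ht h
    have : a s = a t := by rw [← hfa s hs, ← hfa t ht, h]
    rcases lt_trichotomy s t with h' | h' | h'
    · exact absurd (ha s t h' ht) (by omega)
    · exact h'
    · exact absurd (ha t s h' hs) (by omega)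
  -- coverage: every point is an endpoint
  have hunion : ((Finset.range n).image a) ∪ ((Finset.range n).image b)
      = Finset.range (2 * n) := by
    apply Finset.eq_of_subset_of_card_le
    · intro m hm
      rcases Finset.mem_union.mp hm with h | h
      · obtain ⟨t, ht, rfl⟩ := Finset.mem_image.mp h
        exact Finset.mem_range.mpr (haval t (Finset.mem_range.mp ht))
      · obtain ⟨t, ht, rfl⟩ := Finset.mem_image.mp h
        rw [← hb t (Finset.mem_range.mp ht)]
        exact Finset.mem_range.mpr (x (fa t)).isLt
    · have hScard : ((Finset.range n).image a).card = n := by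
        rw [Finset.card_image_of_injOn, Finset.card_range]
        intro s hs t ht h
        simp only [Finset.coe_range, Set.mem_Iio] at hs ht
        rcases lt_trichotomy s t with h' | h' | h'
        · exact absurd (ha s t h' ht) (by omega)
        · exact h'
        · exact absurd (ha t s h' hs) (by omega)
      have hTcard : ((Finset.range n).image b).card = n := by
        rw [Finset.card_image_of_injOn, Finset.card_range]
        intro s hs t ht h
        simp only [Finset.coe_range, Set.mem_Iio] at hs ht
        have h1 : x (fa s) = x (fa t) := Fin.ext (by rw [hb s hs, hb t ht, h])
        exact hfainj s t hs ht (x.injective h1)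
      have hdisj : Disjoint ((Finset.range n).image a) ((Finset.range n).image b) := by
        rw [Finset.disjoint_left]
        intro m hma hmb
        obtain ⟨s, hs, hsa⟩ := Finset.mem_image.mp hma
        obtain ⟨t, ht, htb⟩ := Finset.mem_image.mp hmb
        rw [Finset.mem_range] at hs ht
        -- a s = b t
        have h1 : fa s = x (fa t) := Fin.ext (by rw [hfa s hs, hb t ht, hsa, htb])
        have h2 : x (fa s) = fa t := by rw [h1, hxx]
        have h3 : b s = a t := by rw [← hb s hs, h2, hfa t ht]
        have h4 := hab s hs
        have h5 := hab t ht
        omega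
      rw [Finset.card_union_of_disjoint hdisj, hScard, hTcard, Finset.card_range]
      omega
  have hcova : ∀ i : Fin (2 * n), (i : ℕ) < (x i : ℕ) → ∃ t, t < n ∧ fa t = i := by
    intro i hi
    have hm : (i : ℕ) ∈ Finset.range (2 * n) := Finset.mem_range.mpr i.isLt
    rw [← hunion] at hm
    rcases Finset.mem_union.mp hm with h | h
    · obtain ⟨t, ht, hta⟩ := Finset.mem_image.mp h
      rw [Finset.mem_range] at ht
      exact ⟨t, ht, Fin.ext (by rw [hfa t ht, hta])⟩
    · obtain ⟨t, ht, htb⟩ := Finset.mem_image.mp h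
      rw [Finset.mem_range] at ht
      have h1 : x (fa t) = i := Fin.ext (by rw [hb t ht, htb])
      have h2 : x i = fa t := by rw [← h1, hxx]
      have : (x i : ℕ) = a t := by rw [h2, hfa t ht]
      have h3 : a t < b t := hab t ht
      omega
  have hcovb : ∀ i : Fin (2 * n), (x i : ℕ) < (i : ℕ) → ∃ t, t < n ∧ x (fa t) = i := by
    intro i hi
    have hm : (i : ℕ) ∈ Finset.range (2 * n) := Finset.mem_range.mpr i.isLt
    rw [← hunion] at hm
    rcases Finset.mem_union.mp hm with h | h
    · obtain ⟨t, ht, hta⟩ := Finset.mem_image.mp h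
      rw [Finset.mem_range] at ht
      have h1 : fa t = i := Fin.ext (by rw [hfa t ht, hta])
      have h2 : (x i : ℕ) = b t := by rw [← h1, hb t ht]
      have h3 : a t < b t := hab t ht
      have h4 : (i : ℕ) = a t := by rw [← h1, hfa t ht]
      omega
    · obtain ⟨t, ht, htb⟩ := Finset.mem_image.mp h
      rw [Finset.mem_range] at ht
      exact ⟨t, ht, Fin.ext (by rw [hb t ht, htb])⟩
  -- named finsets
  set D1 : Finset (Fin (2 * n) × Fin (2 * n)) :=
    Finset.univ.filter fun p => p.1 < p.2 ∧ x p.2 < x p.1 ∧ p.1 < x p.2 with hD1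
  set D2 : Finset (Fin (2 * n) × Fin (2 * n)) :=
    Finset.univ.filter fun p => p.1 < p.2 ∧ x p.2 < x p.1 ∧ x p.2 < p.1 with hD2
  set F : Finset (Fin (2 * n) × Fin (2 * n)) :=
    Finset.univ.filter fun p => p.1 < p.2 ∧ x p.2 = p.1 with hF
  set D : Finset (Fin (2 * n) × Fin (2 * n)) :=
    Finset.univ.filter fun p => p.1 < p.2 ∧ p.2 < x p.1 ∧ p.1 < x p.2 with hD
  set Good : ℕ → Finset (Fin (2 * n)) :=
    fun t => Finset.univ.filter fun k => fa t < k ∧ k < x (fa t) ∧ fa t < x k with hGood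
  set Bad : ℕ → Finset (Fin (2 * n)) :=
    fun t => Finset.univ.filter fun k => fa t < k ∧ k < x (fa t) ∧ x k < fa t with hBad
  -- Step C : split of the inversion set
  have hsplitcard : invCount x = D1.card + D2.card + F.card := by
    have hsplit : (Finset.univ.filter fun p : Fin (2 * n) × Fin (2 * n) =>
        p.1 < p.2 ∧ x p.2 < x p.1) = (D1 ∪ D2) ∪ F := by
      ext p
      simp only [hD1, hD2, hF, Finset.mem_union, Finset.mem_filter, Finset.mem_univ, true_and]
      constructor
      · rintro ⟨h1, h2⟩
        rcases lt_trichotomy p.1 (x p.2) with h | h | h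
        · exact Or.inl (Or.inl ⟨h1, h2, h⟩)
        · exact Or.inr ⟨h1, h.symm⟩
        · exact Or.inl (Or.inr ⟨h1, h2, h⟩)
      · rintro ((⟨h1, h2, _⟩ | ⟨h1, h2, _⟩) | ⟨h1, h2⟩)
        · exact ⟨h1, h2⟩
        · exact ⟨h1, h2⟩
        · refine ⟨h1, ?_⟩
          have h3 : x p.1 = p.2 := by rw [← h2, hxx]
          rw [h2, h3]; exact h1
    have d12 : Disjoint D1 D2 := by
      rw [Finset.disjoint_left]
      intro p h1 h2
      simp only [hD1, hD2, Finset.mem_filter, Finset.mem_univ, true_and] at h1 h2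
      exact absurd h2.2.2 (not_lt.mpr (le_of_lt h1.2.2))
    have d3 : Disjoint (D1 ∪ D2) F := by
      rw [Finset.disjoint_left]
      intro p h1 h2
      simp only [hF, Finset.mem_filter, Finset.mem_univ, true_and] at h2
      rcases Finset.mem_union.mp h1 with h | h <;>
        simp only [hD1, hD2, Finset.mem_filter, Finset.mem_univ, true_and] at h
      · exact absurd h2.2 (ne_of_gt h.2.2)
      · exact absurd h2.2 (ne_of_lt h.2.2)
    rw [invCount, hsplit, Finset.card_union_of_disjoint d3, Finset.card_union_of_disjoint d12]
  -- Step B : F has n elements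
  have hFcard : F.card = n := by
    have : (Finset.range n).card = F.card := by
      apply Finset.card_bij (fun t _ => ((fa t, x (fa t)) : Fin (2 * n) × Fin (2 * n)))
      · intro t ht
        rw [Finset.mem_range] at ht
        simp only [hF, Finset.mem_filter, Finset.mem_univ, true_and]
        refine ⟨?_, hxx _⟩
        rw [Fin.lt_def, hfa t ht, hb t ht]
        exact hab t ht
      · intro s hs t ht h
        rw [Finset.mem_range] at hs ht
        rw [Prod.mk.injEq] at h
        exact hfainj s t hs ht h.1
      · intro p hp
        simp only [hF, Finset.mem_filter, Finset.mem_univ, true_and] at hp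
        have h2 : x p.1 = p.2 := by rw [← hp.2, hxx]
        have h3 : (p.1 : ℕ) < (x p.1 : ℕ) := by rw [h2]; exact Fin.lt_def.mp hp.1
        obtain ⟨t, ht, hft⟩ := hcova p.1 h3
        refine ⟨t, Finset.mem_range.mpr ht, ?_⟩
        rw [hft, h2]
    rw [← this, Finset.card_range]
  -- Step A : D1 and D2 have the same size
  have hD12 : D1.card = D2.card := by
    apply Finset.card_bij (fun p _ => ((x p.2, x p.1) : Fin (2 * n) × Fin (2 * n)))
    · intro p hp
      simp only [hD1, Finset.mem_filter, Finset.mem_univ, true_and] at hp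
      simp only [hD2, Finset.mem_filter, Finset.mem_univ, true_and, hxx]
      exact ⟨hp.2.1, hp.1, hp.2.2⟩
    · intro p hp q hq h
      rw [Prod.mk.injEq] at h
      exact Prod.ext (x.injective h.2) (x.injective h.1)
    · intro p hp
      simp only [hD2, Finset.mem_filter, Finset.mem_univ, true_and] at hp
      refine ⟨(x p.2, x p.1), ?_, ?_⟩
      · simp only [hD1, Finset.mem_filter, Finset.mem_univ, true_and, hxx]
        exact ⟨hp.2.1, hp.1, hp.2.2⟩
      · simp [hxx]
  -- Step D : D1 ≃ D
  have hD1D : D1.card = D.card := by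
    apply Finset.card_bij (fun p _ => ((p.1, x p.2) : Fin (2 * n) × Fin (2 * n)))
    · intro p hp
      simp only [hD1, Finset.mem_filter, Finset.mem_univ, true_and] at hp
      simp only [hD, Finset.mem_filter, Finset.mem_univ, true_and, hxx]
      exact ⟨hp.2.2, hp.2.1, hp.1⟩
    · intro p hp q hq h
      rw [Prod.mk.injEq] at h
      exact Prod.ext h.1 (x.injective h.2)
    · intro p hp
      simp only [hD, Finset.mem_filter, Finset.mem_univ, true_and] at hp
      refine ⟨(p.1, x p.2), ?_, ?_⟩
      · simp only [hD1, Finset.mem_filter, Finset.mem_univ, true_and, hxx]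
        exact ⟨hp.2.2, hp.2.1, hp.1⟩
      · simp [hxx]
  -- Step E : D decomposes as a sum over arcs
  have hDsum : D.card = ∑ t ∈ Finset.range n, (Good t).card := by
    rw [← Finset.card_sigma]
    symm
    apply Finset.card_bij (fun q _ => ((fa q.1, q.2) : Fin (2 * n) × Fin (2 * n)))
    · intro q hq
      rw [Finset.mem_sigma] at hq
      obtain ⟨hq1, hq2⟩ := hq
      simp only [hGood, Finset.mem_filter, Finset.mem_univ, true_and] at hq2
      simp only [hD, Finset.mem_filter, Finset.mem_univ, true_and]
      exact ⟨hq2.1, hq2.2.1, hq2.2.2⟩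
    · intro q hq q' hq' h
      rw [Finset.mem_sigma, Finset.mem_range] at hq hq'
      rw [Prod.mk.injEq] at h
      have h3 : q.1 = q'.1 := hfainj _ _ hq.1 hq'.1 h.1
      exact Sigma.ext h3 (by rw [h.2])
    · intro p hp
      simp only [hD, Finset.mem_filter, Finset.mem_univ, true_and] at hp
      have h1 : (p.1 : ℕ) < (x p.1 : ℕ) :=
        lt_trans (Fin.lt_def.mp hp.1) (Fin.lt_def.mp hp.2.1)
      obtain ⟨t, ht, hft⟩ := hcova p.1 h1
      refine ⟨⟨t, p.2⟩, ?_, ?_⟩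
      · rw [Finset.mem_sigma]
        refine ⟨Finset.mem_range.mpr ht, ?_⟩
        simp only [hGood, Finset.mem_filter, Finset.mem_univ, true_and, hft]
        exact ⟨hp.1, hp.2.1, hp.2.2⟩
      · simp [hft]
  -- Step F : each arc interior splits into good and bad points
  have hGB : ∀ t, t < n → (Good t).card + (Bad t).card = b t - a t - 1 := by
    intro t ht
    have hGoodBad : Good t ∪ Bad t = Finset.Ioo (fa t) (x (fa t)) := by
      ext k
      simp only [hGood, hBad, Finset.mem_union, Finset.mem_filter, Finset.mem_univ, true_and,
        Finset.mem_Ioo]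
      constructor
      · rintro (⟨h1, h2, _⟩ | ⟨h1, h2, _⟩) <;> exact ⟨h1, h2⟩
      · rintro ⟨h1, h2⟩
        rcases lt_trichotomy (fa t) (x k) with h | h | h
        · exact Or.inl ⟨h1, h2, h⟩
        · exfalso
          have : k = x (fa t) := by rw [h, hxx]
          rw [this] at h2; exact lt_irrefl _ h2
        · exact Or.inr ⟨h1, h2, h⟩
    have hdisjGB : Disjoint (Good t) (Bad t) := by
      rw [Finset.disjoint_left]
      intro k h1 h2
      simp only [hGood, hBad, Finset.mem_filter, Finset.mem_univ, true_and] at h1 h2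
      exact absurd h2.2.2 (not_lt.mpr (le_of_lt h1.2.2))
    rw [← Finset.card_union_of_disjoint hdisjGB, hGoodBad, Fin.card_Ioo, hfa t ht, hb t ht]
  -- Step G : total bad points = crossings
  have hBadsum : crossings n a b = ∑ t ∈ Finset.range n, (Bad t).card := by
    rw [← Finset.card_sigma, crossings]
    apply Finset.card_bij (fun p _ => (⟨p.2, x (fa p.1)⟩ : Σ _ : ℕ, Fin (2 * n)))
    · intro p hp
      simp only [Finset.mem_filter, Finset.mem_product, Finset.mem_range] at hp
      obtain ⟨⟨hp1, hp2⟩, hst', ha', hc1, hc2⟩ := hp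
      rw [Finset.mem_sigma]
      refine ⟨Finset.mem_range.mpr hp2, ?_⟩
      simp only [hBad, Finset.mem_filter, Finset.mem_univ, true_and]
      refine ⟨?_, ?_, ?_⟩
      · rw [Fin.lt_def, hfa p.2 hp2, hb p.1 hp1]; exact hc1
      · rw [Fin.lt_def, hb p.1 hp1, hb p.2 hp2]; exact hc2
      · rw [Fin.lt_def, hxx, hfa p.1 hp1, hfa p.2 hp2]; exact ha'
    · intro p hp q hq h
      simp only [Finset.mem_filter, Finset.mem_product, Finset.mem_range] at hp hq
      have h1 : p.2 = q.2 := congrArg (fun z : Σ _ : ℕ, Fin (2 * n) => z.1) h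
      have h2 : x (fa p.1) = x (fa q.1) := congrArg (fun z : Σ _ : ℕ, Fin (2 * n) => z.2) h
      have h3 : p.1 = q.1 := hfainj _ _ hp.1.1 hq.1.1 (x.injective h2)
      exact Prod.ext h3 h1
    · intro q hq
      rw [Finset.mem_sigma, Finset.mem_range] at hq
      obtain ⟨ht, hk⟩ := hq
      simp only [hBad, Finset.mem_filter, Finset.mem_univ, true_and] at hk
      obtain ⟨h1, h2, h3⟩ := hk
      have hxk : (x q.2 : ℕ) < (q.2 : ℕ) :=
        lt_trans (Fin.lt_def.mp h3) (Fin.lt_def.mp h1)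
      obtain ⟨s, hs, hbs⟩ := hcovb q.2 hxk
      have hfas : fa s = x q.2 := by rw [← hbs, hxx]
      have has : a s < a q.1 := by
        rw [← hfa s hs, hfas, ← hfa q.1 ht]; exact Fin.lt_def.mp h3
      have hslt : s < q.1 := (hst s q.1 hs ht).mp has
      refine ⟨(s, q.1), ?_, ?_⟩
      · simp only [Finset.mem_filter, Finset.mem_product, Finset.mem_range]
        refine ⟨⟨hs, ht⟩, hslt, has, ?_, ?_⟩
        · rw [← hfa q.1 ht, ← hb s hs, hbs]; exact Fin.lt_def.mp h1
        · rw [← hb s hs, hbs, ← hb q.1 ht]; exact Fin.lt_def.mp h2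
      · simp [hbs]
  -- Final arithmetic
  have h1 : invCount x = n + 2 * D.card := by
    omega
  have h2 : D.card + crossings n a b = ∑ t ∈ Finset.range n, (b t - a t - 1) := by
    rw [hDsum, hBadsum, ← Finset.sum_add_distrib]
    exact Finset.sum_congr rfl fun t ht => hGB t (Finset.mem_range.mp ht)
  have hsum : ∑ t ∈ Finset.range n, ((b t : ℤ) - (a t : ℤ) - 1)
      = ((∑ t ∈ Finset.range n, (b t - a t - 1) : ℕ) : ℤ) := by
    rw [Nat.cast_sum]
    apply Finset.sum_congr rfl
    intro t ht
    have := hab t (Finset.mem_range.mp ht)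
    omega
  rw [hsum]
  omega
end

section
/- The generating function Σ_{x ∈ F_{2n}} q^{ℓ(x)} over fixed-point-free involutions x ∈ S_{2n}, where ℓ(x) = (inv(x) - n)/2, equals the q-double-factorial [2n-1]_q!! = [2n-1]_q [2n-3]_q ··· [3]_q [1]_q, where [m]_q = 1 + q + ··· + q^{m-1}. -/
namespace FPFAux

open Finset Equiv

variable {N : ℕ}

def eupv (j m : ℕ) : ℕ := if m < j then m else m + 1
def dwv (j k : ℕ) : ℕ := if k < j then k else k - 1
def xv (x : Perm (Fin N)) (m : ℕ) : ℕ := if h : m < N then (x ⟨m, h⟩ : ℕ) else m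
def fv (j : ℕ) (x : Perm (Fin N)) (k : ℕ) : ℕ :=
  if k = N + 1 then j else if k = j then N + 1 else eupv j (xv x (dwv j k))

lemma eupv_lt_iff {j a b : ℕ} : eupv j a < eupv j b ↔ a < b := by
  unfold eupv; split <;> split <;> omega

lemma eupv_inj {j a b : ℕ} (h : eupv j a = eupv j b) : a = b := by
  revert h; unfold eupv; split <;> split <;> omega

lemma eupv_ne {j a : ℕ} : eupv j a ≠ j := by unfold eupv; split <;> omega

lemma eupv_le {j a : ℕ} (h : a < N) : eupv j a ≤ N := by unfold eupv; split <;> omega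

lemma lt_eupv_iff {j a : ℕ} : j < eupv j a ↔ j ≤ a := by unfold eupv; split <;> omega

lemma dwv_eupv {j a : ℕ} : dwv j (eupv j a) = a := by
  by_cases h : a < j <;> simp [dwv, eupv, h] <;> omega

lemma eupv_dwv {j k : ℕ} (h : k ≠ j) : eupv j (dwv j k) = k := by
  by_cases h2 : k < j
  · simp [dwv, eupv, h2]
  · simp only [dwv, if_neg h2, eupv]
    rw [if_neg (by omega)]
    omega

lemma dwv_lt {j k : ℕ} (hj : j ≤ N) (h2 : k ≠ j) (h3 : k ≤ N) : dwv j k < N := by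
  unfold dwv; split <;> omega

lemma dwv_lt_dwv_iff {j k1 k2 : ℕ} (h1 : k1 ≠ j) (h2 : k2 ≠ j) :
    dwv j k1 < dwv j k2 ↔ k1 < k2 := by unfold dwv; split <;> split <;> omega

lemma dwv_inj {j k1 k2 : ℕ} (h1 : k1 ≠ j) (h2 : k2 ≠ j) (h : dwv j k1 = dwv j k2) : k1 = k2 := by
  revert h; unfold dwv; split <;> split <;> omega

lemma le_dwv_iff {j k : ℕ} (h : k ≠ j) : j ≤ dwv j k ↔ j < k := by unfold dwv; split <;> omega

lemma xv_lt {x : Perm (Fin N)} {m : ℕ} (h : m < N) : xv x m < N := by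
  simp only [xv, dif_pos h]; exact (x _).2

lemma xv_eq {x : Perm (Fin N)} {m : ℕ} (h : m < N) : xv x m = (x ⟨m, h⟩ : ℕ) := dif_pos h

lemma xv_xv {x : Perm (Fin N)} (hx : ∀ i, x (x i) = i) {m : ℕ} (h : m < N) :
    xv x (xv x m) = m := by
  rw [xv_eq h, xv_eq (x ⟨m, h⟩).2]
  simp only [Fin.eta, hx]

lemma xv_ne {x : Perm (Fin N)} (hx : ∀ i, x i ≠ i) {m : ℕ} (h : m < N) : xv x m ≠ m := by
  rw [xv_eq h]
  intro he
  exact hx ⟨m, h⟩ (Fin.ext he)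

section Phi

variable {j : ℕ} {x : Perm (Fin N)}

lemma fv_top : fv j x (N+1) = j := if_pos rfl

lemma fv_j (h : j ≠ N+1) : fv j x j = N+1 := by unfold fv; rw [if_neg h, if_pos rfl]

lemma fv_rest {k : ℕ} (h1 : k ≠ N+1) (h2 : k ≠ j) :
    fv j x k = eupv j (xv x (dwv j k)) := by unfold fv; rw [if_neg h1, if_neg h2]

lemma fv_lt (hj : j ≤ N) {k : ℕ} (hk : k < N+2) : fv j x k < N+2 := by
  by_cases h1 : k = N+1
  · rw [h1, fv_top]; omega
  · by_cases h2 : k = j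
    · rw [h2, fv_j (by omega)]; omega
    · rw [fv_rest h1 h2]
      have := eupv_le (j := j) (xv_lt (x := x) (dwv_lt hj h2 (by omega)))
      omega

lemma fv_le (hj : j ≤ N) {k : ℕ} (hk : k < N+2) : fv j x k ≤ N+1 := by
  by_cases h1 : k = N+1
  · rw [h1, fv_top]; omega
  · by_cases h2 : k = j
    · rw [h2, fv_j (by omega)]
    · rw [fv_rest h1 h2]
      exact le_trans (eupv_le (xv_lt (dwv_lt hj h2 (by omega)))) (by omega)

lemma fv_fv (hj : j ≤ N) (hx : ∀ i, x (x i) = i) {k : ℕ} (hk : k < N+2) :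
    fv j x (fv j x k) = k := by
  by_cases h1 : k = N+1
  · rw [h1, fv_top, fv_j (by omega)]
  · by_cases h2 : k = j
    · rw [h2, fv_j (by omega), fv_top]
    · have hd : dwv j k < N := dwv_lt hj h2 (by omega)
      have hv : xv x (dwv j k) < N := xv_lt hd
      rw [fv_rest h1 h2, fv_rest (by have := eupv_le (j := j) hv; omega) eupv_ne, dwv_eupv,
        xv_xv hx hd, eupv_dwv h2]

def ΦF (j : ℕ) (hj : j ≤ N) (x : Perm (Fin N)) : Fin (N+2) → Fin (N+2) :=
  fun k => ⟨fv j x k, fv_lt hj k.2⟩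

def Φ (j : ℕ) (hj : j ≤ N) (x : Perm (Fin N)) (hx : ∀ i, x (x i) = i) : Perm (Fin (N+2)) :=
  ⟨ΦF j hj x, ΦF j hj x, fun k => Fin.ext (fv_fv hj hx k.2), fun k => Fin.ext (fv_fv hj hx k.2)⟩

@[simp] lemma Φ_val {hj : j ≤ N} {hx : ∀ i, x (x i) = i} (k : Fin (N+2)) :
    (Φ j hj x hx k : ℕ) = fv j x (k : ℕ) := rfl

lemma Φ_mul {hj : j ≤ N} {hx : ∀ i, x (x i) = i} :
    Φ j hj x hx * Φ j hj x hx = 1 :=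
  Equiv.ext fun k => by
    rw [Equiv.Perm.mul_apply, Equiv.Perm.one_apply]
    exact Fin.ext (fv_fv hj hx k.2)

lemma Φ_fpf {hj : j ≤ N} {hx : ∀ i, x (x i) = i} (hfp : ∀ i, x i ≠ i) :
    ∀ k, Φ j hj x hx k ≠ k := by
  intro k he
  have hval : fv j x (k : ℕ) = (k : ℕ) := congrArg Fin.val he
  by_cases h1 : (k : ℕ) = N+1
  · rw [h1, fv_top] at hval; omega
  · by_cases h2 : (k : ℕ) = j
    · rw [h2, fv_j (by omega)] at hval; omega
    · rw [fv_rest h1 h2] at hval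
      have hd : dwv j (k : ℕ) < N := dwv_lt hj h2 (by have := k.2; omega)
      have : eupv j (xv x (dwv j (k : ℕ))) = eupv j (dwv j (k : ℕ)) := by
        rw [hval, eupv_dwv h2]
      exact xv_ne hfp hd (eupv_inj this)

end Phi

section Res

variable {w : Perm (Fin (N+2))}

def jv (w : Perm (Fin (N+2))) : ℕ := xv w (N+1)

lemma jv_lt : jv w < N+2 := xv_lt (by omega)

lemma jv_le (hfp : ∀ k, w k ≠ k) : jv w ≤ N := by
  have h1 : jv w < N+2 := jv_lt
  have h2 : jv w ≠ N+1 := xv_ne hfp (by omega)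
  omega

lemma xv_jv (hw : ∀ k, w (w k) = k) : xv w (jv w) = N+1 := xv_xv hw (by omega)

def rv (w : Perm (Fin (N+2))) (m : ℕ) : ℕ := dwv (jv w) (xv w (eupv (jv w) m))

section
variable (hw : ∀ k, w (w k) = k) (hfp : ∀ k, w k ≠ k)
include hw hfp

lemma rv_facts {m : ℕ} (hm : m < N) :
    xv w (eupv (jv w) m) ≠ N+1 ∧ xv w (eupv (jv w) m) ≠ jv w ∧
      xv w (eupv (jv w) m) < N+2 := by
  have hj : jv w ≤ N := jv_le hfp
  have he1 : eupv (jv w) m ≤ N := eupv_le hm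
  have he2 : eupv (jv w) m ≠ jv w := eupv_ne
  refine ⟨?_, ?_, xv_lt (by omega)⟩
  · intro h
    have := xv_xv hw (show eupv (jv w) m < N+2 by omega)
    rw [h] at this
    exact he2 (by rw [← this]; rfl)
  · intro h
    have := xv_xv hw (show eupv (jv w) m < N+2 by omega)
    rw [h, xv_jv hw] at this
    omega

lemma rv_lt {m : ℕ} (hm : m < N) : rv w m < N := by
  obtain ⟨h1, h2, h3⟩ := rv_facts hw hfp hm
  exact dwv_lt (jv_le hfp) h2 (by omega)

lemma rv_rv {m : ℕ} (hm : m < N) : rv w (rv w m) = m := by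
  obtain ⟨h1, h2, h3⟩ := rv_facts hw hfp hm
  unfold rv
  rw [eupv_dwv h2, xv_xv hw (show eupv (jv w) m < N+2 by have := eupv_le (j := jv w) hm; omega),
    dwv_eupv]

lemma rv_ne (hfpx : True) {m : ℕ} (hm : m < N) : rv w m ≠ m := by
  obtain ⟨h1, h2, h3⟩ := rv_facts hw hfp hm
  intro he
  unfold rv at he
  have h4 : dwv (jv w) (eupv (jv w) m) = m := dwv_eupv
  have h5 : xv w (eupv (jv w) m) = eupv (jv w) m := dwv_inj h2 eupv_ne (he.trans h4.symm)
  exact xv_ne hfp (show eupv (jv w) m < N+2 by have := eupv_le (j := jv w) hm; omega) h5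

def res (w : Perm (Fin (N+2))) (hw : ∀ k, w (w k) = k) (hfp : ∀ k, w k ≠ k) : Perm (Fin N) :=
  ⟨fun m => ⟨rv w m, rv_lt hw hfp m.2⟩, fun m => ⟨rv w m, rv_lt hw hfp m.2⟩,
    fun m => Fin.ext (rv_rv hw hfp m.2), fun m => Fin.ext (rv_rv hw hfp m.2)⟩

@[simp] lemma res_val (m : Fin N) : (res w hw hfp m : ℕ) = rv w (m : ℕ) := rfl

lemma res_invol : ∀ i, res w hw hfp (res w hw hfp i) = i :=
  fun i => Fin.ext (rv_rv hw hfp i.2)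

lemma res_mul : res w hw hfp * res w hw hfp = 1 :=
  Equiv.ext fun k => by
    rw [Equiv.Perm.mul_apply, Equiv.Perm.one_apply]; exact res_invol hw hfp k

lemma res_fpf : ∀ i, res w hw hfp i ≠ i := by
  intro i he
  exact rv_ne hw hfp trivial i.2 (congrArg Fin.val he)

lemma xv_res {m : ℕ} (hm : m < N) : xv (res w hw hfp) m = rv w m := by
  rw [xv_eq hm]; rfl

lemma fv_res {k : ℕ} (hk : k < N+2) : fv (jv w) (res w hw hfp) k = xv w k := by
  have hj : jv w ≤ N := jv_le hfp
  by_cases h1 : k = N+1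
  · rw [h1, fv_top]; rfl
  · by_cases h2 : k = jv w
    · rw [h2, fv_j (by omega), xv_jv hw]
    · rw [fv_rest h1 h2]
      have hd : dwv (jv w) k < N := dwv_lt hj h2 (by omega)
      rw [xv_res hw hfp hd]
      unfold rv
      rw [eupv_dwv h2]
      have hne : xv w k ≠ jv w := by
        intro h
        have := xv_xv hw (show k < N+2 from hk)
        rw [h, xv_jv hw] at this
        omega
      rw [eupv_dwv hne]

lemma recon : Φ (jv w) (jv_le hfp) (res w hw hfp) (res_invol hw hfp) = w :=
  Equiv.ext fun k => Fin.ext (by rw [Φ_val, fv_res hw hfp k.2, xv_eq k.2, Fin.eta])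

end

lemma jv_Φ {j : ℕ} {x : Perm (Fin N)} (hj : j ≤ N) (hx : ∀ i, x (x i) = i) :
    jv (Φ j hj x hx) = j := by
  unfold jv
  rw [xv_eq (by omega : N+1 < N+2), Φ_val]
  exact fv_top

lemma res_Φ {j : ℕ} {x : Perm (Fin N)} (hj : j ≤ N) (hx : ∀ i, x (x i) = i)
    (hw : ∀ k, Φ j hj x hx (Φ j hj x hx k) = k) (hfp : ∀ k, Φ j hj x hx k ≠ k) :
    res (Φ j hj x hx) hw hfp = x := by
  apply Equiv.ext
  intro m
  apply Fin.ext
  rw [res_val]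
  unfold rv
  have hjv : jv (Φ j hj x hx) = j := jv_Φ hj hx
  rw [hjv]
  have he : eupv j (m : ℕ) < N+2 := by have := eupv_le (j := j) m.2; omega
  rw [xv_eq he, Φ_val]
  rw [fv_rest (by have := eupv_le (j := j) m.2; omega) eupv_ne, dwv_eupv]
  rw [dwv_eupv, xv_eq m.2, Fin.eta]

end Res

section Count

def eupF (j : ℕ) : Fin N → Fin (N+2) :=
  fun i => ⟨eupv j (i : ℕ), by have := eupv_le (j := j) i.2; omega⟩

lemma eupF_inj {j : ℕ} : Function.Injective (eupF (N := N) j) := by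
  intro a b h
  exact Fin.ext (eupv_inj (congrArg Fin.val h))

lemma card_filter_le (c : ℕ) :
    ((univ : Finset (Fin N)).filter (fun i : Fin N => c ≤ (i : ℕ))).card = N - c := by
  rw [← Finset.card_range (N - c)]
  refine Finset.card_bij' (fun a _ => (a : ℕ) - c)
    (fun b hb => (⟨c + b, by simp only [Finset.mem_range] at hb; omega⟩ : Fin N)) ?_ ?_ ?_ ?_ <;>
    intro a ha <;>
    simp only [Finset.mem_filter, Finset.mem_univ, Finset.mem_range, true_and, Fin.ext_iff,
      Fin.val_mk] at ha ⊢ <;>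
    first
      | omega
      | (have := a.2; omega)

lemma card_filter_le_perm (x : Perm (Fin N)) (c : ℕ) :
    ((univ : Finset (Fin N)).filter (fun i : Fin N => c ≤ (x i : ℕ))).card = N - c := by
  rw [← card_filter_le (N := N) c]
  have himg : (univ : Finset (Fin N)).filter (fun i : Fin N => c ≤ (x i : ℕ)) =
      ((univ : Finset (Fin N)).filter (fun i : Fin N => c ≤ (i : ℕ))).image x.symm := by
    ext b
    simp only [Finset.mem_filter, Finset.mem_univ, true_and, Finset.mem_image]
    constructor
    · intro hb
      exact ⟨x b, hb, x.symm_apply_apply b⟩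
    · rintro ⟨a, ha, rfl⟩
      rwa [x.apply_symm_apply]
  rw [himg, Finset.card_image_of_injective _ x.symm.injective]

variable {j : ℕ} (hj : j ≤ N) (x : Perm (Fin N)) (hx : ∀ i, x (x i) = i)

lemma partI :
    ((((univ : Finset (Fin (N+2) × Fin (N+2))).filter
        (fun p => p.1 < p.2 ∧ Φ j hj x hx p.2 < Φ j hj x hx p.1)).filter
        (fun p => (p.2 : ℕ) = N+1)).card) = (N - j) + 1 := by
  have hset : (((univ : Finset (Fin (N+2) × Fin (N+2))).filter
        (fun p => p.1 < p.2 ∧ Φ j hj x hx p.2 < Φ j hj x hx p.1)).filter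
        (fun p => (p.2 : ℕ) = N+1)) =
      insert ((⟨j, by omega⟩ : Fin (N+2)), (⟨N+1, by omega⟩ : Fin (N+2)))
        ((univ.filter (fun i : Fin N => j ≤ (x i : ℕ))).image
          (fun i => (eupF j i, (⟨N+1, by omega⟩ : Fin (N+2))))) := by
    ext p
    simp only [Finset.mem_filter, Finset.mem_univ, true_and, Finset.mem_insert,
      Finset.mem_image, Fin.lt_def, Φ_val]
    constructor
    · rintro ⟨⟨hlt, hiv⟩, ht⟩
      have hfvt : fv j x (p.2 : ℕ) = j := by rw [ht]; exact fv_top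
      rw [hfvt] at hiv
      have hp1 : (p.1 : ℕ) ≤ N := by omega
      by_cases hpj : (p.1 : ℕ) = j
      · left; exact Prod.ext (Fin.ext hpj) (Fin.ext ht)
      · right
        have hd : dwv j (p.1 : ℕ) < N := dwv_lt hj hpj hp1
        refine ⟨⟨dwv j (p.1 : ℕ), hd⟩, ?_, ?_⟩
        · rw [fv_rest (by omega) hpj] at hiv
          rw [← xv_eq hd]
          exact lt_eupv_iff.mp hiv
        · refine Prod.ext (Fin.ext ?_) (Fin.ext ?_)
          · exact eupv_dwv hpj
          · exact ht.symm
    · rintro (rfl | ⟨i, hi, rfl⟩)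
      · show (j < N+1 ∧ fv j x (N+1) < fv j x j) ∧ (N+1 : ℕ) = N+1
        refine ⟨⟨by omega, ?_⟩, rfl⟩
        rw [fv_top, fv_j (by omega)]
        omega
      · have he : eupv j (i : ℕ) ≤ N := eupv_le i.2
        show (eupv j (i : ℕ) < N+1 ∧ fv j x (N+1) < fv j x (eupv j (i : ℕ))) ∧ (N+1 : ℕ) = N+1
        refine ⟨⟨by omega, ?_⟩, rfl⟩
        rw [fv_top, fv_rest (by omega) eupv_ne, dwv_eupv, xv_eq i.2, Fin.eta]
        exact lt_eupv_iff.mpr hi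
  rw [hset, Finset.card_insert_of_notMem, Finset.card_image_of_injective _
      (fun a b h => eupF_inj (congrArg Prod.fst h)), card_filter_le_perm]
  intro hmem
  simp only [Finset.mem_image, Finset.mem_filter] at hmem
  obtain ⟨i, _, heq⟩ := hmem
  have : eupv j (i : ℕ) = j := congrArg (fun q : Fin (N+2) × Fin (N+2) => (q.1 : ℕ)) heq
  exact eupv_ne this

lemma partIIa :
    (((((univ : Finset (Fin (N+2) × Fin (N+2))).filter
        (fun p => p.1 < p.2 ∧ Φ j hj x hx p.2 < Φ j hj x hx p.1)).filter
        (fun p => ¬ (p.2 : ℕ) = N+1)).filter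
        (fun p => (p.1 : ℕ) = j)).card) = N - j := by
  have hset : ((((univ : Finset (Fin (N+2) × Fin (N+2))).filter
        (fun p => p.1 < p.2 ∧ Φ j hj x hx p.2 < Φ j hj x hx p.1)).filter
        (fun p => ¬ (p.2 : ℕ) = N+1)).filter
        (fun p => (p.1 : ℕ) = j)) =
      (univ.filter (fun q : Fin N => j ≤ (q : ℕ))).image
        (fun q => ((⟨j, by omega⟩ : Fin (N+2)), eupF j q)) := by
    ext p
    simp only [Finset.mem_filter, Finset.mem_univ, true_and, Finset.mem_image,
      Fin.lt_def, Φ_val]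
    constructor
    · rintro ⟨⟨⟨hlt, hiv⟩, hA⟩, hB⟩
      have hp2j : (p.2 : ℕ) ≠ j := by omega
      have hd : dwv j (p.2 : ℕ) < N := dwv_lt hj hp2j (by have := p.2.2; omega)
      refine ⟨⟨dwv j (p.2 : ℕ), hd⟩, ?_, ?_⟩
      · rw [Fin.val_mk, le_dwv_iff hp2j]
        omega
      · refine Prod.ext (Fin.ext ?_) (Fin.ext ?_)
        · exact hB.symm
        · exact eupv_dwv hp2j
    · rintro ⟨q, hq, rfl⟩
      have he : eupv j (q : ℕ) ≤ N := eupv_le q.2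
      show ((j < eupv j (q : ℕ) ∧ fv j x (eupv j (q : ℕ)) < fv j x j) ∧
        ¬ eupv j (q : ℕ) = N+1) ∧ j = j
      refine ⟨⟨⟨lt_eupv_iff.mpr hq, ?_⟩, by omega⟩, rfl⟩
      rw [fv_j (by omega), fv_rest (by omega) eupv_ne]
      have := eupv_le (j := j) (xv_lt (x := x) (dwv_lt hj (eupv_ne (j := j) (a := (q : ℕ)))
        (by omega)))
      omega
  rw [hset, Finset.card_image_of_injective _
      (fun a b h => eupF_inj (congrArg Prod.snd h)), card_filter_le]

lemma partIIb :
    (((((univ : Finset (Fin (N+2) × Fin (N+2))).filter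
        (fun p => p.1 < p.2 ∧ Φ j hj x hx p.2 < Φ j hj x hx p.1)).filter
        (fun p => ¬ (p.2 : ℕ) = N+1)).filter
        (fun p => ¬ (p.1 : ℕ) = j)).card) = invCount x := by
  have hset : ((((univ : Finset (Fin (N+2) × Fin (N+2))).filter
        (fun p => p.1 < p.2 ∧ Φ j hj x hx p.2 < Φ j hj x hx p.1)).filter
        (fun p => ¬ (p.2 : ℕ) = N+1)).filter
        (fun p => ¬ (p.1 : ℕ) = j)) =
      (univ.filter (fun q : Fin N × Fin N => q.1 < q.2 ∧ x q.2 < x q.1)).image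
        (fun q => (eupF j q.1, eupF j q.2)) := by
    ext p
    simp only [Finset.mem_filter, Finset.mem_univ, true_and, Finset.mem_image,
      Fin.lt_def, Φ_val]
    constructor
    · rintro ⟨⟨⟨hlt, hiv⟩, hA⟩, hB⟩
      have hp2j : (p.2 : ℕ) ≠ j := by
        intro h
        rw [h, fv_j (by omega)] at hiv
        have := fv_le (x := x) hj p.1.2
        omega
      have hp1t : (p.1 : ℕ) ≠ N+1 := by have := p.2.2; omega
      have hd1 : dwv j (p.1 : ℕ) < N := dwv_lt hj hB (by have := p.1.2; omega)
      have hd2 : dwv j (p.2 : ℕ) < N := dwv_lt hj hp2j (by have := p.2.2; omega)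
      rw [fv_rest hp1t hB, fv_rest hA hp2j] at hiv
      refine ⟨(⟨dwv j (p.1 : ℕ), hd1⟩, ⟨dwv j (p.2 : ℕ), hd2⟩), ⟨?_, ?_⟩, ?_⟩
      · show dwv j (p.1 : ℕ) < dwv j (p.2 : ℕ)
        exact (dwv_lt_dwv_iff hB hp2j).mpr hlt
      · show (x ⟨dwv j (p.2 : ℕ), hd2⟩ : ℕ) < (x ⟨dwv j (p.1 : ℕ), hd1⟩ : ℕ)
        rw [← xv_eq hd1, ← xv_eq hd2]
        exact eupv_lt_iff.mp hiv
      · exact Prod.ext (Fin.ext (eupv_dwv hB)) (Fin.ext (eupv_dwv hp2j))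
    · rintro ⟨⟨a, b⟩, ⟨h1, h2⟩, rfl⟩
      show ((eupv j (a : ℕ) < eupv j (b : ℕ) ∧
          fv j x (eupv j (b : ℕ)) < fv j x (eupv j (a : ℕ))) ∧
        ¬ eupv j (b : ℕ) = N+1) ∧ ¬ eupv j (a : ℕ) = j
      have hea : eupv j (a : ℕ) ≤ N := eupv_le a.2
      have heb : eupv j (b : ℕ) ≤ N := eupv_le b.2
      refine ⟨⟨⟨eupv_lt_iff.mpr h1, ?_⟩, by omega⟩, eupv_ne⟩
      rw [fv_rest (by omega) eupv_ne, fv_rest (by omega) eupv_ne, dwv_eupv, dwv_eupv,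
        xv_eq a.2, xv_eq b.2, Fin.eta, Fin.eta]
      exact eupv_lt_iff.mpr h2
  rw [hset, Finset.card_image_of_injective _ (fun q1 q2 h =>
    Prod.ext (eupF_inj (congrArg Prod.fst h)) (eupF_inj (congrArg Prod.snd h))), invCount]

lemma invCount_Φ : invCount (Φ j hj x hx) = invCount x + 2 * (N - j) + 1 := by
  have h1 := Finset.card_filter_add_card_filter_not
    (s := (univ : Finset (Fin (N+2) × Fin (N+2))).filter
      (fun p => p.1 < p.2 ∧ Φ j hj x hx p.2 < Φ j hj x hx p.1))
    (fun p => (p.2 : ℕ) = N+1)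
  have h2 := Finset.card_filter_add_card_filter_not
    (s := ((univ : Finset (Fin (N+2) × Fin (N+2))).filter
      (fun p => p.1 < p.2 ∧ Φ j hj x hx p.2 < Φ j hj x hx p.1)).filter
      (fun p => ¬ (p.2 : ℕ) = N+1))
    (fun p => (p.1 : ℕ) = j)
  have e1 := partI hj x hx
  have e2 := partIIa hj x hx
  have e3 := partIIb hj x hx
  rw [invCount]
  omega

end Count

lemma invol_pt {M : ℕ} {w : Perm (Fin M)} (h : w * w = 1) : ∀ k, w (w k) = k := by
  intro k
  rw [← Equiv.Perm.mul_apply, h]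
  rfl

lemma parity (n : ℕ) : ∀ w : Perm (Fin (2*n)), w * w = 1 → (∀ i, w i ≠ i) →
    ∃ m, invCount w = n + 2*m := by
  induction n with
  | zero => exact fun w _ _ => ⟨0, by simp [invCount]⟩
  | succ n ih =>
    rw [show 2*(n+1) = 2*n+2 from by ring]
    intro w hw hfp
    have hwp : ∀ k, w (w k) = k := invol_pt hw
    obtain ⟨m, hm⟩ := ih (res w hwp hfp) (res_mul hwp hfp) (res_fpf hwp hfp)
    have hcount : invCount w = invCount (res w hwp hfp) + 2*(2*n - jv w) + 1 := by
      conv_lhs => rw [← recon hwp hfp]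
      exact invCount_Φ (jv_le hfp) _ (res_invol hwp hfp)
    have hjle : jv w ≤ 2*n := jv_le hfp
    exact ⟨m + (2*n - jv w), by omega⟩

lemma expo (n : ℕ) (w : Perm (Fin (2*n+2))) (hA : ∀ k, w (w k) = k) (hB : ∀ k, w k ≠ k) :
    (invCount w - (n+1))/2 = (invCount (res w hA hB) - n)/2 + (2*n - jv w) := by
  have h1 : invCount w = invCount (res w hA hB) + 2*(2*n - jv w) + 1 := by
    conv_lhs => rw [← recon hA hB]
    exact invCount_Φ (jv_le hB) _ (res_invol hA hB)
  obtain ⟨m, hm⟩ := parity n (res w hA hB) (res_mul hA hB) (res_fpf hA hB)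
  have h2 : jv w ≤ 2*n := jv_le hB
  omega

open Polynomial in
lemma step (n : ℕ) :
    (∑ w ∈ (Finset.univ.filter
        fun w : Perm (Fin (2*n+2)) => w * w = 1 ∧ ∀ i, w i ≠ i),
      (Polynomial.X : Polynomial ℤ) ^ ((invCount w - (n+1)) / 2)) =
    (∑ i ∈ Finset.range (2*n+1), (Polynomial.X : Polynomial ℤ) ^ i) *
      (∑ x ∈ (Finset.univ.filter
        fun x : Perm (Fin (2*n)) => x * x = 1 ∧ ∀ i, x i ≠ i),
        (Polynomial.X : Polynomial ℤ) ^ ((invCount x - n) / 2)) := by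
  have hbij : (∑ w ∈ (Finset.univ.filter
        fun w : Perm (Fin (2*n+2)) => w * w = 1 ∧ ∀ i, w i ≠ i),
      (Polynomial.X : Polynomial ℤ) ^ ((invCount w - (n+1)) / 2)) =
      ∑ p ∈ (univ : Finset (Fin (2*n+1))) ×ˢ (Finset.univ.filter
        fun x : Perm (Fin (2*n)) => x * x = 1 ∧ ∀ i, x i ≠ i),
        (Polynomial.X : Polynomial ℤ) ^ ((invCount p.2 - n) / 2 + (2*n - (p.1 : ℕ))) := by
    refine Finset.sum_bij'
      (fun w hw => ((⟨jv w, by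
          have := jv_le (N := 2*n) (Finset.mem_filter.mp hw).2.2
          omega⟩ : Fin (2*n+1)),
        res w (invol_pt (Finset.mem_filter.mp hw).2.1) (Finset.mem_filter.mp hw).2.2))
      (fun p hp => Φ (p.1 : ℕ) (Nat.lt_succ_iff.mp p.1.2) p.2
        (invol_pt (Finset.mem_filter.mp (Finset.mem_product.mp hp).2).2.1))
      ?_ ?_ ?_ ?_ ?_
    · intro w hw
      rw [Finset.mem_product]
      refine ⟨Finset.mem_univ _, ?_⟩
      rw [Finset.mem_filter]
      exact ⟨Finset.mem_univ _,
        res_mul (invol_pt (Finset.mem_filter.mp hw).2.1) ((Finset.mem_filter.mp hw).2.2),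
        res_fpf (invol_pt (Finset.mem_filter.mp hw).2.1) ((Finset.mem_filter.mp hw).2.2)⟩
    · intro p hp
      rw [Finset.mem_filter]
      refine ⟨Finset.mem_univ _, Φ_mul, Φ_fpf ?_⟩
      exact (Finset.mem_filter.mp (Finset.mem_product.mp hp).2).2.2
    · intro w hw
      exact recon (invol_pt (Finset.mem_filter.mp hw).2.1) ((Finset.mem_filter.mp hw).2.2)
    · intro p hp
      refine Prod.ext (Fin.ext ?_) ?_
      · exact jv_Φ _ _
      · apply res_Φ
        · exact invol_pt Φ_mul
        · exact Φ_fpf (Finset.mem_filter.mp (Finset.mem_product.mp hp).2).2.2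
    · intro w hw
      congr 1
      exact expo n w (invol_pt (Finset.mem_filter.mp hw).2.1) ((Finset.mem_filter.mp hw).2.2)
  rw [hbij, Finset.sum_product]
  calc (∑ a : Fin (2*n+1), ∑ x ∈ (Finset.univ.filter
        fun x : Perm (Fin (2*n)) => x * x = 1 ∧ ∀ i, x i ≠ i),
        (Polynomial.X : Polynomial ℤ) ^ ((invCount x - n) / 2 + (2*n - (a : ℕ))))
      = ∑ a : Fin (2*n+1), (Polynomial.X : Polynomial ℤ) ^ (2*n - (a : ℕ)) *
          ∑ x ∈ (Finset.univ.filter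
            fun x : Perm (Fin (2*n)) => x * x = 1 ∧ ∀ i, x i ≠ i),
            (Polynomial.X : Polynomial ℤ) ^ ((invCount x - n) / 2) := by
        refine Finset.sum_congr rfl fun a _ => ?_
        rw [Finset.mul_sum]
        refine Finset.sum_congr rfl fun x _ => ?_
        rw [Nat.add_comm, pow_add]
    _ = (∑ a : Fin (2*n+1), (Polynomial.X : Polynomial ℤ) ^ (2*n - (a : ℕ))) *
          ∑ x ∈ (Finset.univ.filter
            fun x : Perm (Fin (2*n)) => x * x = 1 ∧ ∀ i, x i ≠ i),
            (Polynomial.X : Polynomial ℤ) ^ ((invCount x - n) / 2) := by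
        rw [Finset.sum_mul]
    _ = _ := by
        congr 1
        rw [Fin.sum_univ_eq_sum_range (fun i => (Polynomial.X : Polynomial ℤ) ^ (2*n - i))
          (2*n+1)]
        have h := Finset.sum_range_reflect (fun i => (Polynomial.X : Polynomial ℤ) ^ i) (2*n+1)
        simp only [Nat.add_sub_cancel] at h
        exact h

end FPFAux

open Polynomial FPFAux Equiv in
/-- The length generating function of `F_{2n}`, with `ℓ(x) = (inv(x) - n)/2`, is the
`q`-double factorial `[2n-1]_q!! = [2n-1]_q [2n-3]_q ⋯ [3]_q [1]_q`, where
`[m]_q = 1 + q + ⋯ + q^{m-1}`. -/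
theorem length_generating_function (n : ℕ) :
    ∑ x ∈ (Finset.univ.filter
        fun x : Equiv.Perm (Fin (2 * n)) => x * x = 1 ∧ ∀ i, x i ≠ i),
      (Polynomial.X : Polynomial ℤ) ^ ((invCount x - n) / 2) =
      ∏ k ∈ Finset.range n, ∑ i ∈ Finset.range (2 * k + 1), (Polynomial.X : Polynomial ℤ) ^ i := by
  induction n with
  | zero =>
    rw [Finset.prod_range_zero]
    have huniv : (Finset.univ.filter
        fun x : Perm (Fin (2*0)) => x * x = 1 ∧ ∀ i, x i ≠ i) = Finset.univ :=
      Finset.filter_true_of_mem (fun x _ =>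
        ⟨Equiv.ext fun i => absurd i.2 (by omega), fun i => absurd i.2 (by omega)⟩)
    rw [huniv]
    have hone : ∀ x : Perm (Fin (2*0)), invCount x = 0 := fun x => by simp [invCount]
    calc ∑ x ∈ (Finset.univ : Finset (Perm (Fin (2*0)))),
          (Polynomial.X : Polynomial ℤ) ^ ((invCount x - 0) / 2)
        = ∑ _x ∈ (Finset.univ : Finset (Perm (Fin (2*0)))), (1 : Polynomial ℤ) :=
          Finset.sum_congr rfl (fun x _ => by rw [hone x]; norm_num)
      _ = 1 := by
          rw [Finset.sum_const, Finset.card_univ,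
            show Fintype.card (Perm (Fin (2*0))) = 1 by simp, one_smul]
  | succ n ih =>
    rw [show 2*(n+1) = 2*n+2 from by ring]
    rw [step n, ih, Finset.prod_range_succ]
    ring
end

section
/- Let x ∈ F_{2n} be a fixed-point-free involution and let Rk(x) be its rank-control matrix, whose (i,j)-entry r_{i,j} is the rank of the upper-left i×j submatrix of the permutation matrix of x. Then the number of indices i ∈ {1,...,2n} with r_{i,i} = r_{i-1,i-1} (setting r_{0,0} = 0) is exactly n. -/
open Finset Matrix

/-- The rank of the upper-left `k × k` submatrix of the permutation matrix of `x`
(realized as the rank of the full matrix with all entries outside the upper-left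
`k × k` corner replaced by `0`). -/
noncomputable def rkDiag {m : ℕ} (x : Equiv.Perm (Fin m)) (k : ℕ) : ℕ :=
  (Matrix.of fun p q : Fin m =>
    if (p : ℕ) < k ∧ (q : ℕ) < k ∧ x p = q then (1 : ℚ) else 0).rank

lemma rkDiag_eq_card {m : ℕ} (x : Equiv.Perm (Fin m)) (k : ℕ) :
    rkDiag x k
      = ((Finset.univ : Finset (Fin m)).filter
          (fun p : Fin m => (p : ℕ) < k ∧ ((x p : ℕ) < k))).card := by
  classical
  set M : Matrix (Fin m) (Fin m) ℚ := Matrix.of fun p q : Fin m =>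
    if (p : ℕ) < k ∧ (q : ℕ) < k ∧ x p = q then (1 : ℚ) else 0 with hM
  have hMM : M * M.transpose = Matrix.diagonal
      (fun p : Fin m => if (p : ℕ) < k ∧ ((x p : ℕ) < k) then (1 : ℚ) else 0) := by
    ext p p'
    simp only [Matrix.mul_apply, Matrix.transpose_apply, hM, Matrix.of_apply]
    rw [Finset.sum_eq_single (x p)]
    · by_cases h : p = p'
      · subst h
        by_cases h1 : (p : ℕ) < k <;> by_cases h2 : ((x p : ℕ)) < k <;>
          simp [Matrix.diagonal, h1, h2]
      · have hne : x p ≠ x p' := fun hc => h (x.injective hc)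
        simp [Matrix.diagonal, h, hne]
        intro _ _ hc _
        exact absurd hc.symm h
    · intro q _ hq
      have : ¬ (x p = q) := fun hc => hq hc.symm
      simp [this]
    · simp
  have h1 : rkDiag x k = M.rank := rfl
  rw [h1, ← Matrix.rank_self_mul_transpose, hMM, Matrix.rank_diagonal,
    Fintype.card_subtype]
  congr 1
  apply Finset.filter_congr
  intro p _
  by_cases h : (p : ℕ) < k ∧ ((x p : ℕ) < k) <;> simp [h]

/-- For a fixed-point-free involution `x ∈ S_{2n}`, the number of indices
`i ∈ {1, …, 2n}` with `r_{i,i} = r_{i-1,i-1}` in the rank-control matrix is exactly `n`. -/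
theorem rank_control_diagonal_equalities (n : ℕ) (x : Equiv.Perm (Fin (2 * n)))
    (hinv : x * x = 1) (hfpf : ∀ i, x i ≠ i) :
    ((Finset.Icc 1 (2 * n)).filter fun i => rkDiag x i = rkDiag x (i - 1)).card = n := by
  classical
  have hxx : ∀ j, x (x j) = j := by
    intro j
    have := congrArg (fun e => e j) hinv
    simpa [Equiv.Perm.mul_apply] using this
  set S : ℕ → Finset (Fin (2 * n)) := fun k =>
    (Finset.univ.filter fun p : Fin (2 * n) => (p : ℕ) < k ∧ ((x p : ℕ) < k)) with hS
  -- key equivalence, indexed by `j : Fin (2n)` (corresponding to `i = j + 1`)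
  have key : ∀ j : Fin (2 * n),
      (rkDiag x ((j : ℕ) + 1) = rkDiag x (j : ℕ) ↔ (j : ℕ) < (x j : ℕ)) := by
    intro j
    have hsub : S (j : ℕ) ⊆ S ((j : ℕ) + 1) := by
      intro p hp
      simp only [hS, Finset.mem_filter] at hp ⊢
      exact ⟨Finset.mem_univ p, by omega, by omega⟩
    rw [rkDiag_eq_card, rkDiag_eq_card]
    constructor
    · intro hcard
      by_contra hlt
      push_neg at hlt
      have hne : (x j : ℕ) ≠ (j : ℕ) := fun hc => hfpf j (Fin.ext hc)
      have hxj : (x j : ℕ) < (j : ℕ) := by omega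
      have hjS : j ∈ S ((j : ℕ) + 1) := by
        simp only [hS, Finset.mem_filter]
        exact ⟨Finset.mem_univ j, by omega, by omega⟩
      have hjnS : j ∉ S (j : ℕ) := by
        simp only [hS, Finset.mem_filter]
        intro hc
        omega
      have : (S (j : ℕ)).card < (S ((j : ℕ) + 1)).card :=
        Finset.card_lt_card ((Finset.ssubset_iff_of_subset hsub).mpr ⟨j, hjS, hjnS⟩)
      simp only [hS] at this
      omega
    · intro hgt
      have heq : S ((j : ℕ) + 1) = S (j : ℕ) := by
        apply Finset.Subset.antisymm _ hsub
        intro p hp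
        simp only [hS, Finset.mem_filter] at hp ⊢
        obtain ⟨_, hp1, hp2⟩ := hp
        refine ⟨Finset.mem_univ p, ?_, ?_⟩
        · rcases Nat.lt_or_ge (p : ℕ) (j : ℕ) with h | h
          · exact h
          · exfalso
            have hpj : p = j := Fin.ext (by omega)
            subst hpj
            omega
        · rcases Nat.lt_or_ge (x p : ℕ) (j : ℕ) with h | h
          · exact h
          · exfalso
            have h3 : x p = j := Fin.ext (by omega)
            have h4 : p = x j := by rw [← h3, hxx]
            have h5 : (p : ℕ) = (x j : ℕ) := by rw [h4]
            omega
      have := congrArg Finset.card heq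
      simpa [hS] using this
  -- the set of "up" indices
  set A : Finset (Fin (2 * n)) :=
    Finset.univ.filter (fun j : Fin (2 * n) => (j : ℕ) < (x j : ℕ)) with hA
  have hcard : ((Finset.Icc 1 (2 * n)).filter
      fun i => rkDiag x i = rkDiag x (i - 1)).card = A.card := by
    apply Finset.card_bij (fun a ha => (⟨a - 1, by
      obtain ⟨hmem, _⟩ := Finset.mem_filter.mp ha
      obtain ⟨h1, h2⟩ := Finset.mem_Icc.mp hmem
      omega⟩ : Fin (2 * n)))
    · intro a ha
      obtain ⟨hmem, hr⟩ := Finset.mem_filter.mp ha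
      obtain ⟨h1, h2⟩ := Finset.mem_Icc.mp hmem
      rw [hA, Finset.mem_filter]
      refine ⟨Finset.mem_univ _, ?_⟩
      have hk := key ⟨a - 1, by omega⟩
      simp only [Fin.val_mk] at hk ⊢
      apply hk.mp
      have he : a - 1 + 1 = a := by omega
      rw [he]
      exact hr
    · intro a ha b hb hab
      obtain ⟨hmem, _⟩ := Finset.mem_filter.mp ha
      obtain ⟨h1, _⟩ := Finset.mem_Icc.mp hmem
      obtain ⟨hmem', _⟩ := Finset.mem_filter.mp hb
      obtain ⟨h1', _⟩ := Finset.mem_Icc.mp hmem'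
      have := Fin.mk.injEq _ _ _ _ ▸ hab
      have h3 : a - 1 = b - 1 := congrArg Fin.val hab
      omega
    · intro b hb
      rw [hA, Finset.mem_filter] at hb
      refine ⟨(b : ℕ) + 1, ?_, Fin.ext (by simp)⟩
      rw [Finset.mem_filter, Finset.mem_Icc]
      refine ⟨⟨by omega, by omega⟩, ?_⟩
      have hk := (key b).mpr hb.2
      simpa using hk
  rw [hcard]
  -- now show |A| = n
  set B : Finset (Fin (2 * n)) :=
    Finset.univ.filter (fun j : Fin (2 * n) => (x j : ℕ) < (j : ℕ)) with hB
  have hcardAB : A.card = B.card := by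
    apply Finset.card_bij (fun j _ => x j)
    · intro j hj
      rw [hA, Finset.mem_filter] at hj
      rw [hB, Finset.mem_filter]
      exact ⟨Finset.mem_univ _, by rw [hxx]; exact hj.2⟩
    · intro a _ b _ h
      exact x.injective h
    · intro b hb
      rw [hB, Finset.mem_filter] at hb
      refine ⟨x b, ?_, by rw [hxx]⟩
      rw [hA, Finset.mem_filter]
      exact ⟨Finset.mem_univ _, by rw [hxx]; exact hb.2⟩
  have hdisj : Disjoint A B := by
    rw [Finset.disjoint_left]
    intro j hj hj'
    rw [hA, Finset.mem_filter] at hj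
    rw [hB, Finset.mem_filter] at hj'
    omega
  have hunion : A ∪ B = Finset.univ := by
    ext j
    simp only [Finset.mem_union, hA, hB, Finset.mem_filter, Finset.mem_univ, true_and,
      iff_true]
    have : (x j : ℕ) ≠ (j : ℕ) := fun hc => hfpf j (Fin.ext hc)
    omega
  have htot := Finset.card_union_of_disjoint hdisj
  rw [hunion, Finset.card_univ, Fintype.card_fin] at htot
  omega
end

section
/- Let x ∈ F_{2n} be a fixed-point-free involution with an ee-rise, that is, indices i < j with i < j < x(i) < x(j) (non-crossing ee-rise). Let y = x·(i,j)·(x(i),x(j)) (conjugation producing the involution with y(i)=x(j), y(j)=x(i), and y agreeing with x elsewhere). Then y is also a fixed-point-free involution and inv(y) > inv(x). -/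
/-- Covering transformation of a non-crossing `ee`-rise `i < j < x(i) < x(j)` of a
fixed-point-free involution `x` produces a fixed-point-free involution with strictly more
inversions. -/
theorem ee_rise_covering (n : ℕ) (x y : Equiv.Perm (Fin (2 * n)))
    (hinv : x * x = 1) (hfpf : ∀ i, x i ≠ i)
    (i j : Fin (2 * n)) (h1 : i < j) (h2 : j < x i) (h3 : x i < x j)
    (hy1 : y i = x j) (hy2 : y (x j) = i) (hy3 : y j = x i) (hy4 : y (x i) = j)
    (hy5 : ∀ k, k ≠ i → k ≠ j → k ≠ x i → k ≠ x j → y k = x k) :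
    y * y = 1 ∧ (∀ k, y k ≠ k) ∧ invCount x < invCount y := by
  classical
  have hxx : ∀ k, x (x k) = k := by
    intro k
    have := congrArg (fun f : Equiv.Perm (Fin (2 * n)) => f k) hinv
    simpa using this
  -- handy order facts
  have hixi : i < x i := h1.trans h2
  have hjxj : j < x j := h2.trans h3
  have hixj : i < x j := hixi.trans h3
  -- the permutation ψ = (i j)(x i, x j), as a raw function
  set ψ : Fin (2 * n) → Fin (2 * n) := fun k =>
    if k = i then j else if k = j then i else if k = x i then x j
    else if k = x j then x i else k with hψdef
  have hψi : ψ i = j := by simp [hψdef]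
  have hψj : ψ j = i := by simp [hψdef, h1.ne']
  have hψxi : ψ (x i) = x j := by simp [hψdef, hixi.ne', h2.ne']
  have hψxj : ψ (x j) = x i := by simp [hψdef, hixj.ne', hjxj.ne', h3.ne']
  have hψk : ∀ k, k ≠ i → k ≠ j → k ≠ x i → k ≠ x j → ψ k = k := by
    intro k hk1 hk2 hk3 hk4; simp [hψdef, hk1, hk2, hk3, hk4]
  have hψψ : ∀ k, ψ (ψ k) = k := by
    intro k
    by_cases hk1 : k = i
    · rw [hk1, hψi, hψj]
    by_cases hk2 : k = j
    · rw [hk2, hψj, hψi]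
    by_cases hk3 : k = x i
    · rw [hk3, hψxi, hψxj]
    by_cases hk4 : k = x j
    · rw [hk4, hψxj, hψxi]
    · rw [hψk k hk1 hk2 hk3 hk4, hψk k hk1 hk2 hk3 hk4]
  have hψinj : ∀ u v, ψ u = ψ v → u = v := by
    intro u v huv
    have := congrArg ψ huv
    rwa [hψψ, hψψ] at this
  -- y composed with ψ is x
  have hyψ : ∀ k, y (ψ k) = x k := by
    intro k
    by_cases hk1 : k = i
    · rw [hk1, hψi, hy3]
    by_cases hk2 : k = j
    · rw [hk2, hψj, hy1]
    by_cases hk3 : k = x i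
    · rw [hk3, hψxi, hy2, hxx]
    by_cases hk4 : k = x j
    · rw [hk4, hψxj, hy4, hxx]
    · rw [hψk k hk1 hk2 hk3 hk4, hy5 k hk1 hk2 hk3 hk4]
  have hyx : ∀ k, y k = x (ψ k) := by
    intro k
    have := hyψ (ψ k)
    rwa [hψψ] at this
  -- Part 1 : y is an involution
  have part1 : y * y = 1 := by
    ext k
    simp only [Equiv.Perm.mul_apply, Equiv.Perm.one_apply]
    by_cases hk1 : k = i
    · rw [hk1, hy1, hy2]
    by_cases hk2 : k = j
    · rw [hk2, hy3, hy4]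
    by_cases hk3 : k = x i
    · rw [hk3, hy4, hy3]
    by_cases hk4 : k = x j
    · rw [hk4, hy2, hy1]
    · rw [hy5 k hk1 hk2 hk3 hk4]
      have e1 : x k ≠ i := by
        intro h; apply hk3; have := congrArg x h; rwa [hxx] at this
      have e2 : x k ≠ j := by
        intro h; apply hk4; have := congrArg x h; rwa [hxx] at this
      have e3 : x k ≠ x i := fun h => hk1 (x.injective h)
      have e4 : x k ≠ x j := fun h => hk2 (x.injective h)
      rw [hy5 (x k) e1 e2 e3 e4, hxx]
  -- Part 2 : y is fixed-point-free
  have part2 : ∀ k, y k ≠ k := by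
    intro k
    by_cases hk1 : k = i
    · rw [hk1, hy1]; exact hixj.ne'
    by_cases hk2 : k = j
    · rw [hk2, hy3]; exact h2.ne'
    by_cases hk3 : k = x i
    · rw [hk3, hy4]; exact h2.ne
    by_cases hk4 : k = x j
    · rw [hk4, hy2]; exact hixj.ne
    · rw [hy5 k hk1 hk2 hk3 hk4]; exact hfpf k
  -- key case analysis: "bad" inversion pairs of x remain inversions of y
  have hbad : ∀ p q : Fin (2 * n), p < q → x q < x p → ψ q < ψ p → x (ψ q) < x (ψ p) := by
    intro p q hpq hxinv hψlt
    by_cases hp1 : p = i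
    · rw [hp1, hψi] at hψlt ⊢
      rw [hp1] at hpq hxinv
      by_cases hq2 : q = j
      · rw [hq2] at hxinv; exact absurd hxinv (not_lt.mpr h3.le)
      by_cases hq3 : q = x i
      · rw [hq3, hψxi] at hψlt; exact absurd hψlt (not_lt.mpr hjxj.le)
      by_cases hq4 : q = x j
      · rw [hq4, hψxj] at hψlt; exact absurd hψlt (not_lt.mpr h2.le)
      · have hq1 : q ≠ i := hpq.ne'
        rw [hψk q hq1 hq2 hq3 hq4] at hψlt ⊢
        exact hxinv.trans h3
    by_cases hp2 : p = j
    · rw [hp2, hψj] at hψlt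
      rw [hp2] at hpq
      by_cases hq3 : q = x i
      · rw [hq3, hψxi] at hψlt; exact absurd hψlt (not_lt.mpr hixj.le)
      by_cases hq4 : q = x j
      · rw [hq4, hψxj] at hψlt; exact absurd hψlt (not_lt.mpr hixi.le)
      · have hq1 : q ≠ i := (h1.trans hpq).ne'
        have hq2 : q ≠ j := hpq.ne'
        rw [hψk q hq1 hq2 hq3 hq4] at hψlt
        exact absurd (hψlt.trans h1) (not_lt.mpr hpq.le)
    by_cases hp3 : p = x i
    · rw [hp3, hψxi] at hψlt ⊢
      rw [hp3] at hpq hxinv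
      by_cases hq4 : q = x j
      · rw [hq4, hxx, hxx] at hxinv
        exact absurd (hxinv.trans h1) (lt_irrefl _)
      · have hq1 : q ≠ i := (hixi.trans hpq).ne'
        have hq2 : q ≠ j := (h2.trans hpq).ne'
        have hq3 : q ≠ x i := hpq.ne'
        rw [hψk q hq1 hq2 hq3 hq4] at hψlt ⊢
        rw [hxx] at hxinv ⊢
        exact hxinv.trans h1
    by_cases hp4 : p = x j
    · rw [hp4, hψxj] at hψlt
      rw [hp4] at hpq
      have hq1 : q ≠ i := (hixj.trans hpq).ne'
      have hq2 : q ≠ j := (hjxj.trans hpq).ne'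
      have hq3 : q ≠ x i := (h3.trans hpq).ne'
      have hq4 : q ≠ x j := hpq.ne'
      rw [hψk q hq1 hq2 hq3 hq4] at hψlt
      exact absurd ((h3.trans hpq).trans hψlt) (lt_irrefl _)
    · rw [hψk p hp1 hp2 hp3 hp4] at hψlt ⊢
      by_cases hq1 : q = i
      · rw [hq1, hψi] at hψlt
        rw [hq1] at hpq
        exact absurd ((hpq.trans h1).trans hψlt) (lt_irrefl _)
      by_cases hq2 : q = j
      · rw [hq2, hψj] at hψlt ⊢
        rw [hq2] at hxinv
        exact h3.trans hxinv
      by_cases hq3 : q = x i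
      · rw [hq3, hψxi] at hψlt
        rw [hq3] at hpq
        exact absurd ((hpq.trans h3).trans hψlt) (lt_irrefl _)
      by_cases hq4 : q = x j
      · rw [hq4, hψxj] at hψlt ⊢
        rw [hq4, hxx] at hxinv
        rw [hxx]
        exact h1.trans hxinv
      · rw [hψk q hq1 hq2 hq3 hq4] at hψlt
        exact absurd (hpq.trans hψlt) (lt_irrefl _)
  -- Part 3 : inversion count strictly increases
  have part3 : invCount x < invCount y := by
    unfold invCount
    set Sx := (Finset.univ : Finset (Fin (2 * n) × Fin (2 * n))).filter
      (fun p => p.1 < p.2 ∧ x p.2 < x p.1) with hSx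
    set Sy := (Finset.univ : Finset (Fin (2 * n) × Fin (2 * n))).filter
      (fun p => p.1 < p.2 ∧ y p.2 < y p.1) with hSy
    set h : Fin (2 * n) × Fin (2 * n) → Fin (2 * n) × Fin (2 * n) :=
      fun p => if ψ p.1 < ψ p.2 then (ψ p.1, ψ p.2) else p with hhdef
    have key : ∀ p : Fin (2 * n) × Fin (2 * n), p.1 < p.2 → x p.2 < x p.1 →
        (h p).1 < (h p).2 ∧ y (h p).2 < y (h p).1 := by
      intro p hlt hx
      by_cases hc : ψ p.1 < ψ p.2
      · simp only [hhdef, if_pos hc]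
        exact ⟨hc, by rw [hyψ, hyψ]; exact hx⟩
      · simp only [hhdef, if_neg hc]
        have hne : ψ p.2 ≠ ψ p.1 := fun e => hlt.ne' (hψinj _ _ e)
        have hψlt : ψ p.2 < ψ p.1 := lt_of_le_of_ne (not_lt.mp hc) hne
        refine ⟨hlt, ?_⟩
        rw [hyx, hyx]
        exact hbad p.1 p.2 hlt hx hψlt
    have hinjOn : ∀ p ∈ Sx, ∀ q ∈ Sx, h p = h q → p = q := by
      intro p hp q hq e
      rw [hSx, Finset.mem_filter] at hp hq
      by_cases c1 : ψ p.1 < ψ p.2 <;> by_cases c2 : ψ q.1 < ψ q.2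
      · simp only [hhdef, if_pos c1, if_pos c2, Prod.mk.injEq] at e
        exact Prod.ext (hψinj _ _ e.1) (hψinj _ _ e.2)
      · simp only [hhdef, if_pos c1, if_neg c2] at e
        exfalso
        apply c2
        rw [← e]
        simpa [hψψ] using hp.2.1
      · simp only [hhdef, if_neg c1, if_pos c2] at e
        exfalso
        apply c1
        rw [e]
        simpa [hψψ] using hq.2.1
      · simpa [hhdef, if_neg c1, if_neg c2] using e
    have himg : Sx.image h ⊆ Sy := by
      intro r hr
      rw [Finset.mem_image] at hr
      obtain ⟨p, hp, rfl⟩ := hr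
      rw [hSx, Finset.mem_filter] at hp
      obtain ⟨hlt, hxv⟩ := hp.2
      have := key p hlt hxv
      rw [hSy, Finset.mem_filter]
      exact ⟨Finset.mem_univ _, this⟩
    have hmem : (i, j) ∈ Sy := by
      rw [hSy, Finset.mem_filter]
      refine ⟨Finset.mem_univ _, h1, ?_⟩
      show y j < y i
      rw [hy3, hy1]
      exact h3
    have hnot : (i, j) ∉ Sx.image h := by
      intro hmem'
      rw [Finset.mem_image] at hmem'
      obtain ⟨p, hp, he⟩ := hmem'
      rw [hSx, Finset.mem_filter] at hp
      by_cases hc : ψ p.1 < ψ p.2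
      · simp only [hhdef, if_pos hc, Prod.mk.injEq] at he
        have e1 : p.1 = j := by
          have := congrArg ψ he.1; rwa [hψψ, hψi] at this
        have e2 : p.2 = i := by
          have := congrArg ψ he.2; rwa [hψψ, hψj] at this
        have := hp.2.1
        rw [e1, e2] at this
        exact absurd (h1.trans this) (lt_irrefl _)
      · simp only [hhdef, if_neg hc] at he
        have := hp.2.2
        rw [he] at this
        exact absurd (h3.trans this) (lt_irrefl _)
    calc Sx.card = (Sx.image h).card := (Finset.card_image_of_injOn hinjOn).symm
      _ < Sy.card := Finset.card_lt_card
          ((Finset.ssubset_iff_of_subset himg).mpr ⟨(i, j), hmem, hnot⟩)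
  exact ⟨part1, part2, part3⟩
end

section
/- Let x ∈ F_{2n} be a fixed-point-free involution and let i < j be indices with i < x(i) < x(j) < j (an ed-rise, i.e., i is an excedance and j is a deficiency with x(i) < x(j)). Define y by y(i) = j, y(j) = i, y(x(i)) = x(j), y(x(j)) = x(i), and y(k) = x(k) otherwise. Then y is a fixed-point-free involution with inv(y) > inv(x). -/
open Equiv Finset

namespace Equiv.Perm

theorem swap_apply_lt_swap_apply {α : Type*} [LinearOrder α] {p q r s : α} (hpq : p < q)
    (hrs : r < s) (hr : r ∉ Set.Ioo p q) (hs : s ∉ Set.Ioo p q) (hne : (r, s) ≠ (p, q)) :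
    swap p q r < swap p q s := by
  simp only [Set.mem_Ioo, not_and_or, not_lt, Ne, Prod.mk.injEq] at hr hs hne
  simp only [swap_apply_def]
  split_ifs <;> grind

theorem swap_apply_mem_Ioo_iff {α : Type*} [LinearOrder α] {p q k : α} :
    swap p q k ∈ Set.Ioo p q ↔ k ∈ Set.Ioo p q := by
  simp only [Set.mem_Ioo, swap_apply_def]
  split_ifs <;> grind

variable {m : ℕ}

def inversions (x : Perm (Fin m)) : Finset (Fin m × Fin m) :=
  univ.filter fun rs => rs.1 < rs.2 ∧ x rs.2 < x rs.1

theorem mem_inversions {x : Perm (Fin m)} {rs : Fin m × Fin m} :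
    rs ∈ x.inversions ↔ rs.1 < rs.2 ∧ x rs.2 < x rs.1 := by
  simp [inversions]

theorem invCount_eq_card_inversions (x : Perm (Fin m)) : invCount x = #x.inversions := rfl

theorem invCount_lt_mul_swap (x : Perm (Fin m)) {p q : Fin m} (hpq : p < q) (hx : x p < x q) :
    invCount x < invCount (x * swap p q) := by
  set y := x * swap p q
  let f : Fin m × Fin m → Fin m × Fin m := fun rs =>
    if rs.1 ∈ Set.Ioo p q ∨ rs.2 ∈ Set.Ioo p q then rs else (swap p q rs.1, swap p q rs.2)
  have hff : Function.Involutive f := by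
    rintro ⟨r, s⟩
    by_cases h : r ∈ Set.Ioo p q ∨ s ∈ Set.Ioo p q
    · simp only [f, if_pos h]
    · have h' : ¬(swap p q r ∈ Set.Ioo p q ∨ swap p q s ∈ Set.Ioo p q) := by
        rwa [swap_apply_mem_Ioo_iff, swap_apply_mem_Ioo_iff]
      simp only [f, if_neg h, if_neg h', swap_apply_self]
  have hpq_mem : (p, q) ∈ y.inversions := by
    simp [mem_inversions, y, hpq, hx]
  have hmaps : ∀ rs ∈ x.inversions, f rs ∈ y.inversions.erase (p, q) := by
    rintro ⟨r, s⟩ hrs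
    rw [mem_inversions] at hrs
    obtain ⟨hlt, hxrs⟩ := hrs
    rw [mem_erase, mem_inversions]
    by_cases h : r ∈ Set.Ioo p q ∨ s ∈ Set.Ioo p q
    · simp only [f, if_pos h, y, Perm.mul_apply]
      simp only [Set.mem_Ioo, swap_apply_def] at h ⊢
      split_ifs <;> grind
    · simp only [f, if_neg h, y, Perm.mul_apply, swap_apply_self]
      rw [not_or] at h
      refine ⟨?_, swap_apply_lt_swap_apply hpq hlt h.1 h.2 ?_, hxrs⟩
      · grind [swap_apply_left, swap_apply_right, swap_apply_eq_iff]
      · rintro ⟨rfl, rfl⟩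
        exact hx.not_gt hxrs
  rw [invCount_eq_card_inversions, invCount_eq_card_inversions]
  calc #x.inversions = #(x.inversions.image f) := (card_image_of_injective _ hff.injective).symm
    _ ≤ #(y.inversions.erase (p, q)) := card_le_card (by simpa [image_subset_iff] using hmaps)
    _ < #y.inversions := card_erase_lt_of_mem hpq_mem

theorem eq_swap_mul_mul_swap_of_apply {α : Type*} [DecidableEq α] {x y : Perm α}
    (hxx : ∀ k, x (x k) = k) {i j : α} (hi : x i ≠ i) (hij : i ≠ j) (hxij : x i ≠ x j)
    (hj : x j ≠ j) (hy1 : y i = j) (hy2 : y j = i) (hy3 : y (x i) = x j) (hy4 : y (x j) = x i)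
    (hy5 : ∀ k, k ≠ i → k ≠ j → k ≠ x i → k ≠ x j → y k = x k) :
    y = swap (x i) j * x * swap (x i) j := by
  ext k
  simp only [Perm.mul_apply]
  by_cases hk : k = i ∨ k = j ∨ k = x i ∨ k = x j
  · rcases hk with rfl | rfl | rfl | rfl
    · rw [hy1, swap_apply_of_ne_of_ne hi.symm hij, swap_apply_left]
    · rw [hy2, swap_apply_right, hxx, swap_apply_of_ne_of_ne hi.symm hij]
    · rw [hy3, swap_apply_left, swap_apply_of_ne_of_ne hxij.symm hj]
    · rw [hy4, swap_apply_of_ne_of_ne hxij.symm hj, hxx, swap_apply_right]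
  · simp only [not_or] at hk
    obtain ⟨hki, hkj, hkxi, hkxj⟩ := hk
    rw [hy5 k hki hkj hkxi hkxj, swap_apply_of_ne_of_ne hkxi hkj,
      swap_apply_of_ne_of_ne (x.injective.ne hki) (fun h => hkxj (by rw [← h, hxx]))]

end Equiv.Perm

/-- Covering transformation of an `ed`-rise `i < x(i) < x(j) < j` of a fixed-point-free
involution `x` produces a fixed-point-free involution with strictly more inversions. -/
theorem ed_rise_covering (n : ℕ) (x y : Equiv.Perm (Fin (2 * n)))
    (hinv : x * x = 1) (hfpf : ∀ i, x i ≠ i)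
    (i j : Fin (2 * n)) (h1 : i < x i) (h2 : x i < x j) (h3 : x j < j)
    (hy1 : y i = j) (hy2 : y j = i) (hy3 : y (x i) = x j) (hy4 : y (x j) = x i)
    (hy5 : ∀ k, k ≠ i → k ≠ j → k ≠ x i → k ≠ x j → y k = x k) :
    y * y = 1 ∧ (∀ k, y k ≠ k) ∧ invCount x < invCount y := by
  have hxx : ∀ k, x (x k) = k := fun k => by rw [← Perm.mul_apply, hinv, Perm.one_apply]
  have hij : i < j := h1.trans (h2.trans h3)
  rw [Perm.eq_swap_mul_mul_swap_of_apply hxx h1.ne' hij.ne h2.ne h3.ne hy1 hy2 hy3 hy4 hy5]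
  refine ⟨?_, fun k hk => hfpf (swap (x i) j k) ?_, ?_⟩
  · simp only [mul_assoc, swap_mul_self_mul, ← mul_assoc x x, hinv, one_mul, swap_mul_self]
  · apply (swap (x i) j).injective
    simpa using hk
  · have hx1 : x i < x (x j) := by rw [hxx]; exact h2.trans h3
    have hx2 : (x * swap i (x j)) (x i) < (x * swap i (x j)) j := by
      rw [Perm.mul_apply, Perm.mul_apply, swap_apply_of_ne_of_ne h1.ne' h2.ne,
        swap_apply_of_ne_of_ne hij.ne' h3.ne', hxx]
      exact h1.trans h2
    calc invCount x
        _ < invCount (x * swap i (x j)) := Perm.invCount_lt_mul_swap x (h1.trans h2) hx1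
        _ < invCount (x * swap i (x j) * swap (x i) j) :=
          Perm.invCount_lt_mul_swap _ (h2.trans h3) hx2
        _ = invCount (swap (x i) j * x * swap (x i) j) := by
          rw [mul_swap_eq_swap_mul x i (x j), hxx]
end

section
/- The involution j_{2n} = (1,2)(3,4)···(2n-1,2n) is the minimum of the set of fixed-point-free involutions in S_{2n} under the Bruhat order: for every fixed-point-free involution x ∈ S_{2n}, j_{2n} ≤ x in Bruhat order. -/
/-- The Bruhat order on `S_m`: the reflexive-transitive closure of the relation of
multiplying by a transposition while increasing the number of inversions. -/
def bruhatLE {m : ℕ} (x y : Equiv.Perm (Fin m)) : Prop :=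
  Relation.ReflTransGen
    (fun u v => (∃ a b : Fin m, a ≠ b ∧ v = u * Equiv.swap a b) ∧ invCount u < invCount v) x y

lemma invCount_lt_mul_swap {m : ℕ} (u : Equiv.Perm (Fin m)) (a b : Fin m)
    (hab : a < b) (h : u a < u b) :
    invCount u < invCount (u * Equiv.swap a b) := by
  classical
  set s : Equiv.Perm (Fin m) := Equiv.swap a b with hs
  set v : Equiv.Perm (Fin m) := u * s with hv
  have hva : ∀ q, v q = u (s q) := fun q => rfl
  have hss : ∀ q, s (s q) = q := fun q => Equiv.swap_apply_self a b q
  set Tu := (Finset.univ : Finset (Fin m × Fin m)).filter (fun p => p.1 < p.2 ∧ u p.2 < u p.1) with hTu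
  set Tv := (Finset.univ : Finset (Fin m × Fin m)).filter (fun p => p.1 < p.2 ∧ v p.2 < v p.1) with hTv
  set g : Fin m × Fin m → Fin m × Fin m := fun z => if s z.1 < s z.2 then (s z.1, s z.2) else z with hg
  have hmem : ∀ z : Fin m × Fin m, z ∈ Tu ↔ (z.1 < z.2 ∧ u z.2 < u z.1) := by
    intro z; simp [hTu]
  have hmaps : ∀ z ∈ Tu, g z ∈ Tv.erase (a, b) := by
    intro z hz
    obtain ⟨h1, h2⟩ := (hmem z).mp hz
    by_cases hc : s z.1 < s z.2
    · have hgz : g z = (s z.1, s z.2) := if_pos hc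
      rw [hgz, Finset.mem_erase]
      constructor
      · intro he
        have e1 : s z.1 = a := congrArg Prod.fst he
        have e2 : s z.2 = b := congrArg Prod.snd he
        have f1 : z.1 = b := by rw [← hss z.1, e1, hs, Equiv.swap_apply_left]
        have f2 : z.2 = a := by rw [← hss z.2, e2, hs, Equiv.swap_apply_right]
        rw [f1, f2] at h1
        exact absurd h1 (lt_asymm hab)
      · rw [hTv, Finset.mem_filter]
        refine ⟨Finset.mem_univ _, hc, ?_⟩
        show v (s z.2) < v (s z.1)
        rw [hva, hva, hss, hss]; exact h2
    · have hgz : g z = z := if_neg hc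
      rw [hgz, Finset.mem_erase]
      have hz1 : z ≠ (a, b) := by
        intro he
        have e1 : z.1 = a := congrArg Prod.fst he
        have e2 : z.2 = b := congrArg Prod.snd he
        rw [e1, e2] at h2
        exact absurd h2 (lt_asymm h)
      refine ⟨hz1, ?_⟩
      rw [hTv, Finset.mem_filter]
      refine ⟨Finset.mem_univ _, h1, ?_⟩
      show v z.2 < v z.1
      rw [hva, hva]
      by_cases e1a : z.1 = a
      · by_cases e2b : z.2 = b
        · rw [e1a, e2b] at h2; exact absurd h2 (lt_asymm h)
        · have hz2a : z.2 ≠ a := e1a ▸ h1.ne'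
          have hs2 : s z.2 = z.2 := Equiv.swap_apply_of_ne_of_ne hz2a e2b
          have hs1 : s z.1 = b := by rw [e1a, hs, Equiv.swap_apply_left]
          rw [hs1, hs2]
          exact lt_trans (e1a ▸ h2) h
      · by_cases e2b : z.2 = b
        · have hz1b : z.1 ≠ b := e2b ▸ h1.ne
          have hs1 : s z.1 = z.1 := Equiv.swap_apply_of_ne_of_ne e1a hz1b
          have hs2 : s z.2 = a := by rw [e2b, hs, Equiv.swap_apply_right]
          rw [hs1, hs2]
          exact lt_trans h (e2b ▸ h2)
        · by_cases e1b : z.1 = b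
          · exfalso; apply hc
            have hz2a : z.2 ≠ a := by
              intro e; rw [e1b, e] at h1; exact (lt_asymm hab) h1
            have hs1 : s z.1 = a := by rw [e1b, hs, Equiv.swap_apply_right]
            have hs2 : s z.2 = z.2 := Equiv.swap_apply_of_ne_of_ne hz2a e2b
            rw [hs1, hs2]
            exact lt_trans hab (e1b ▸ h1)
          · by_cases e2a : z.2 = a
            · exfalso; apply hc
              have hs2 : s z.2 = b := by rw [e2a, hs, Equiv.swap_apply_left]
              have hs1 : s z.1 = z.1 := Equiv.swap_apply_of_ne_of_ne e1a e1b
              rw [hs1, hs2]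
              exact lt_trans (e2a ▸ h1) hab
            · exfalso; apply hc
              have hs1 : s z.1 = z.1 := Equiv.swap_apply_of_ne_of_ne e1a e1b
              have hs2 : s z.2 = z.2 := Equiv.swap_apply_of_ne_of_ne e2a e2b
              rw [hs1, hs2]; exact h1
  have hgg : ∀ z : Fin m × Fin m, z.1 < z.2 → g (g z) = z := by
    intro z hz
    by_cases hc : s z.1 < s z.2
    · rw [hg]; simp only
      rw [if_pos hc]
      simp only [hss]
      rw [if_pos hz]
    · rw [hg]; simp only
      rw [if_neg hc, if_neg hc]
  have hinj : Set.InjOn g Tu := by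
    intro z1 hz1 z2 hz2 he
    have h1 := ((hmem z1).mp hz1).1
    have h2 := ((hmem z2).mp hz2).1
    rw [← hgg z1 h1, he, hgg z2 h2]
  have hab_mem : (a, b) ∈ Tv := by
    rw [hTv, Finset.mem_filter]
    refine ⟨Finset.mem_univ _, hab, ?_⟩
    show v b < v a
    rw [hva, hva, hs, Equiv.swap_apply_right, Equiv.swap_apply_left]
    exact h
  calc invCount u = Tu.card := rfl
    _ = (Tu.image g).card := (Finset.card_image_of_injOn hinj).symm
    _ ≤ (Tv.erase (a, b)).card := Finset.card_le_card (by
        intro w hw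
        obtain ⟨z, hz, rfl⟩ := Finset.mem_image.mp hw
        exact hmaps z hz)
    _ < Tv.card := Finset.card_erase_lt_of_mem hab_mem
    _ = invCount (u * Equiv.swap a b) := rfl

lemma step_lemma (n : ℕ) (j x : Equiv.Perm (Fin (2 * n)))
    (hj : ∀ i : Fin (2 * n), (j i : ℕ) = if (i : ℕ) % 2 = 0 then (i : ℕ) + 1 else (i : ℕ) - 1)
    (hinv : x * x = 1) (hfpf : ∀ i, x i ≠ i) (hne : x ≠ j) :
    ∃ y : Equiv.Perm (Fin (2 * n)),
      y * y = 1 ∧ (∀ i, y i ≠ i) ∧ invCount y < invCount x ∧ bruhatLE y x := by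
  classical
  have hxx : ∀ q, x (x q) = q := by
    intro q
    have := Equiv.ext_iff.mp hinv q
    simpa [Equiv.Perm.mul_apply] using this
  set F := Finset.univ.filter (fun q : Fin (2 * n) => x q ≠ j q) with hF
  have hFne : F.Nonempty := by
    rw [hF, Finset.filter_nonempty_iff]
    by_contra hcon
    push_neg at hcon
    exact hne (Equiv.ext fun q => by
      by_contra hq
      exact hq (hcon q (Finset.mem_univ q)))
  set i := F.min' hFne with hidef
  have hi_mem : x i ≠ j i := (Finset.mem_filter.mp (F.min'_mem hFne)).2
  have hmin : ∀ q, q < i → x q = j q := by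
    intro q hq
    by_contra hqc
    have hqF : q ∈ F := Finset.mem_filter.mpr ⟨Finset.mem_univ _, hqc⟩
    exact absurd (F.min'_le q hqF) (not_le_of_gt hq)
  -- i is even
  have hieven : (i : ℕ) % 2 = 0 := by
    by_contra hodd
    have h1 : (i : ℕ) % 2 = 1 := by omega
    have hibd : (i : ℕ) < 2 * n := i.isLt
    set q : Fin (2 * n) := ⟨(i : ℕ) - 1, by omega⟩ with hqdef
    have hqlt : q < i := by rw [Fin.lt_def]; show (i : ℕ) - 1 < (i : ℕ); omega
    have hxq : x q = j q := hmin q hqlt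
    have hjq : (j q : ℕ) = (i : ℕ) := by
      rw [hj q]
      have hqv : (q : ℕ) = (i : ℕ) - 1 := rfl
      rw [hqv, if_pos (by omega)]
      omega
    have hxqi : x q = i := Fin.ext (by rw [hxq, hjq])
    have hxi : x i = q := by rw [← hxqi, hxx]
    apply hi_mem
    rw [hxi]
    apply Fin.ext
    rw [hj i, if_neg (by omega)]
  have hmin' : ∀ q : Fin (2 * n), q < i → (x q : ℕ) < (i : ℕ) := by
    intro q hq
    have hql : (q : ℕ) < (i : ℕ) := hq
    rw [hmin q hq, hj q]
    split <;> omega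
  -- x i > i + 1
  have hxi_ne : x i ≠ i := hfpf i
  have hxi_not_lt : ¬ x i < i := by
    intro hlt
    have h2 := hmin' (x i) hlt
    rw [hxx] at h2
    omega
  have hxige : (i : ℕ) < (x i : ℕ) := by
    rcases lt_or_eq_of_le (le_of_not_gt hxi_not_lt) with h | h
    · exact h
    · exact absurd (Fin.ext (congrArg Fin.val h.symm) : x i = i) hxi_ne
  have hxi_gt : (i : ℕ) + 1 < (x i : ℕ) := by
    rcases Nat.lt_or_ge ((i : ℕ) + 1) (x i : ℕ) with h | h
    · exact h
    · exfalso
      apply hi_mem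
      apply Fin.ext
      rw [hj i, if_pos hieven]
      omega
  have hb : (i : ℕ) + 1 < 2 * n := by have := (x i).isLt; omega
  set i1 : Fin (2 * n) := ⟨(i : ℕ) + 1, hb⟩ with hi1def
  have hi1v : (i1 : ℕ) = (i : ℕ) + 1 := rfl
  set p := x i1 with hpdef
  set mm := x i with hmdef
  have hmm : (i : ℕ) + 1 < (mm : ℕ) := hxi_gt
  have hp_ne_i1 : p ≠ i1 := hfpf i1
  have hp_ne_i : p ≠ i := by
    intro h
    have h2 : x i = i1 := by rw [← h, hpdef, hxx]
    have h3 := congrArg Fin.val h2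
    rw [hi1v] at h3
    omega
  have hp_not_lt : ¬ p < i := by
    intro h
    have h2 := hmin' p h
    rw [hpdef, hxx] at h2
    rw [hi1v] at h2
    omega
  have hp_gt : (i : ℕ) + 1 < (p : ℕ) := by
    have h1 : (i : ℕ) ≤ (p : ℕ) := le_of_not_gt hp_not_lt
    have h2 : (p : ℕ) ≠ (i : ℕ) := fun h => hp_ne_i (Fin.ext h)
    have h3 : (p : ℕ) ≠ (i : ℕ) + 1 := fun h => hp_ne_i1 (Fin.ext (h.trans hi1v.symm))
    omega
  have hpm : p ≠ mm := by
    intro h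
    have h2 : x p = x mm := congrArg x h
    rw [hpdef, hmdef, hxx, hxx] at h2
    have h3 := congrArg Fin.val h2
    rw [hi1v] at h3
    omega
  have hii1 : i ≠ i1 := fun h => by
    have := congrArg Fin.val h; rw [hi1v] at this; omega
  have him : i ≠ mm := fun h => by
    have := congrArg Fin.val h; omega
  have hi1m : i1 ≠ mm := fun h => by
    have := congrArg Fin.val h; rw [hi1v] at this; omega
  have hip : i ≠ p := fun h => by
    have := congrArg Fin.val h; omega
  have hi1p : i1 ≠ p := Ne.symm hp_ne_i1
  set t : Equiv.Perm (Fin (2 * n)) := Equiv.swap i1 mm with htdef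
  have htt : ∀ q, t (t q) = q := fun q => Equiv.swap_apply_self _ _ q
  set y : Equiv.Perm (Fin (2 * n)) := t * x * t with hydef
  have hyapp : ∀ q, y q = t (x (t q)) := fun q => rfl
  have hyy : y * y = 1 := by
    apply Equiv.ext
    intro q
    show y (y q) = q
    rw [hyapp, hyapp, htt, hxx, htt]
  have hyfpf : ∀ q, y q ≠ q := by
    intro q h
    apply hfpf (t q)
    have h2 := congrArg t h
    rw [hyapp, htt] at h2
    exact h2
  have hti : t i = i := Equiv.swap_apply_of_ne_of_ne hii1 him
  have htp : t p = p := Equiv.swap_apply_of_ne_of_ne hp_ne_i1 hpm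
  have hyi : y i = i1 := by
    rw [hyapp, hti]
    show t mm = i1
    exact Equiv.swap_apply_right i1 mm
  have hyi1 : y i1 = i := by
    rw [hyapp, show t i1 = mm from Equiv.swap_apply_left i1 mm,
      show x mm = i from hxx i, hti]
  have hyp : y p = mm := by
    rw [hyapp, htp, show x p = i1 from hxx i1]
    exact Equiv.swap_apply_left i1 mm
  have hym : y mm = p := by
    rw [hyapp, show t mm = i1 from Equiv.swap_apply_right i1 mm]
    show t (x i1) = p
    rw [show x i1 = p from rfl, htp]
  have hswap_eq : Equiv.swap i p = y * t * y⁻¹ := by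
    have h0 := Equiv.swap_apply_apply y i1 mm
    rw [hyi1, hym] at h0
    exact h0
  have hyinv : y⁻¹ = y := inv_eq_of_mul_eq_one_right hyy
  have htt1 : t * t = 1 := Equiv.swap_mul_self i1 mm
  have hx_eq : y * Equiv.swap i p * Equiv.swap i1 mm = x := by
    rw [hswap_eq, hyinv]
    show y * (y * t * y) * t = x
    have e1 : y * (y * t * y) * t = (y * y) * (t * (y * t)) := by group
    rw [e1, hyy, one_mul]
    show t * ((t * x * t) * t) = x
    have e2 : t * ((t * x * t) * t) = (t * t) * x * (t * t) := by group
    rw [e2, htt1, one_mul, mul_one]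
  set z : Equiv.Perm (Fin (2 * n)) := y * Equiv.swap i p with hzdef
  have hzi1 : z i1 = i := by
    show y (Equiv.swap i p i1) = i
    rw [Equiv.swap_apply_of_ne_of_ne (Ne.symm hii1) hi1p, hyi1]
  have hzm : z mm = p := by
    show y (Equiv.swap i p mm) = p
    rw [Equiv.swap_apply_of_ne_of_ne (Ne.symm him) (Ne.symm hpm), hym]
  have hilt_p : i < p := Fin.lt_def.mpr (by omega)
  have hi1lt_m : i1 < mm := Fin.lt_def.mpr (by rw [hi1v]; omega)
  have hyilt : y i < y p := by
    rw [hyi, hyp]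
    exact Fin.lt_def.mpr (by rw [hi1v]; omega)
  have hlt1 : invCount y < invCount z := by
    rw [hzdef]
    exact invCount_lt_mul_swap y i p hilt_p hyilt
  have hzlt : z i1 < z mm := by rw [hzi1, hzm]; exact hilt_p
  have hlt2 : invCount z < invCount x := by
    rw [← hx_eq]
    exact invCount_lt_mul_swap z i1 mm hi1lt_m hzlt
  refine ⟨y, hyy, hyfpf, lt_trans hlt1 hlt2, ?_⟩
  exact Relation.ReflTransGen.head ⟨⟨i, p, hip, hzdef⟩, hlt1⟩
    (Relation.ReflTransGen.single ⟨⟨i1, mm, hi1m, hx_eq.symm⟩, hlt2⟩)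

/-- The involution `j_{2n} = (1,2)(3,4)⋯(2n-1,2n)` (0-indexed: swapping `2k` and `2k+1`)
is the minimum of the set of fixed-point-free involutions of `S_{2n}` in Bruhat order. -/
theorem j_is_bruhat_minimum (n : ℕ) (j : Equiv.Perm (Fin (2 * n)))
    (hj : ∀ i : Fin (2 * n), (j i : ℕ) = if (i : ℕ) % 2 = 0 then (i : ℕ) + 1 else (i : ℕ) - 1)
    (x : Equiv.Perm (Fin (2 * n))) (hinv : x * x = 1) (hfpf : ∀ i, x i ≠ i) :
    bruhatLE j x := by
  classical
  suffices H : ∀ N : ℕ, ∀ x : Equiv.Perm (Fin (2 * n)), invCount x ≤ N → x * x = 1 →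
      (∀ i, x i ≠ i) → bruhatLE j x from H (invCount x) x le_rfl hinv hfpf
  intro N
  induction N with
  | zero =>
    intro x hN h1 h2
    by_cases hx : x = j
    · rw [hx]; exact Relation.ReflTransGen.refl
    · obtain ⟨y, _, _, hlt, _⟩ := step_lemma n j x hj h1 h2 hx
      omega
  | succ N ih =>
    intro x hN h1 h2
    by_cases hx : x = j
    · rw [hx]; exact Relation.ReflTransGen.refl
    · obtain ⟨y, hy1, hy2, hlt, hyx⟩ := step_lemma n j x hj h1 h2 hx
      exact Relation.ReflTransGen.trans (ih y (by omega) hy1 hy2) hyx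
end
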